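/- arXiv:2308.02817 — 9 statements merged into one kernel-verified Lean document; each statement's English description precedes it below -/
import Mathlib

section
/- For every n ≥ 3, every subset A ⊆ [n], and every triple a < b < c in [n], exactly 4 of the 6 linear orders on {a,b,c} occur as the restriction to {a,b,c} of some order in the set-alternating domain D_n(A); that is, D_n(A) is copious. -/
/-- `σ` is in the set-alternating domain of `A` on alternatives `{1,…,n}`
(alternative `m` is represented by the index `m-1 : Fin n`; `σ x` is the rank
of alternative `x`, smaller rank = better). For every triple `i < j < k`:
if the middle alternative `j` (whose 1-based name is `j+1`) is in `A`, then
`i` is never ranked below both `j` and `k` (1N3); otherwise `k` is never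
ranked above both `i` and `j` (3N1). -/
def inSetAltDomain (n : ℕ) (A : Finset ℕ) (σ : Equiv.Perm (Fin n)) : Prop :=
  ∀ i j k : Fin n, i < j → j < k →
    (((j : ℕ) + 1 ∈ A) → ¬ (σ j < σ i ∧ σ k < σ i)) ∧
    (((j : ℕ) + 1 ∉ A) → ¬ (σ k < σ i ∧ σ k < σ j))

/-- The set-alternating domain `D_n(A)`. -/
def setAltDomain (n : ℕ) (A : Finset ℕ) : Set (Equiv.Perm (Fin n)) :=
  {σ | inSetAltDomain n A σ}

/-- `f_n(A)`, the cardinality of `D_n(A)`. -/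
noncomputable def fsize (n : ℕ) (A : Finset ℕ) : ℕ := (setAltDomain n A).ncard

/-! In an order of `D_n(A)` the condition at the triple `a < b < c` forbids two of the six
orders of `{a, b, c}`: the two with `a` last if `b ∈ A`, the two with `c` first otherwise.
Each of the four remaining orders is realised by a block order: the identity outside an
interval `[l, r]`, with `r` moved directly above `l` and each interior alternative put above
or below that pair according to whether it lies in `A`. That block orders lie in `D_n(A)` is a
finite case analysis on the position of a triple relative to `l` and `r`. -/

theorem exists_perm_lt_iff_of_injective {n : ℕ} {α : Type*} [LinearOrder α] {f : Fin n → α}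
    (hf : Function.Injective f) :
    ∃ σ : Equiv.Perm (Fin n), ∀ x y, σ x < σ y ↔ f x < f y := by
  refine ⟨(Tuple.sort f)⁻¹, fun x y => ?_⟩
  have hmono : StrictMono (f ∘ Tuple.sort f) :=
    (Tuple.monotone_sort f).strictMono_of_injective (hf.comp (Equiv.injective _))
  simpa using (hmono.lt_iff_lt (a := (Tuple.sort f)⁻¹ x) (b := (Tuple.sort f)⁻¹ y)).symm

/-- Ranks, from best to worst: the alternatives below `l`, the interior alternatives of `[l, r]`
whose successor is not in `A`, then `r`, `l`, the interior alternatives whose successor is in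
`A`, and those above `r`. The successor appears because `x : Fin n` stands for alternative
`x + 1`. -/
def blockClass (A : Finset ℕ) (l r x : ℕ) : ℕ :=
  if x < l then 0 else if x = l then 3 else if x = r then 2
  else if r < x then 5 else if x + 1 ∈ A then 4 else 1

theorem blockClass_cases (A : Finset ℕ) (l r x : ℕ) :
    (blockClass A l r x = 0 ∧ x < l) ∨ (blockClass A l r x = 3 ∧ x = l) ∨
    (blockClass A l r x = 2 ∧ l < x ∧ x = r) ∨ (blockClass A l r x = 5 ∧ l < x ∧ r < x) ∨
    (blockClass A l r x = 4 ∧ l < x ∧ x < r ∧ x + 1 ∈ A) ∨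
    (blockClass A l r x = 1 ∧ l < x ∧ x < r ∧ x + 1 ∉ A) := by
  unfold blockClass
  split_ifs <;> simp_all <;> omega

def blockKey {n : ℕ} (A : Finset ℕ) (l r : ℕ) (x : Fin n) : ℕ ×ₗ Fin n :=
  toLex (blockClass A l r x, x)

theorem inSetAltDomain_of_lt_iff_blockKey {n : ℕ} {A : Finset ℕ} {l r : ℕ}
    {σ : Equiv.Perm (Fin n)} (hσ : ∀ x y, σ x < σ y ↔ blockKey A l r x < blockKey A l r y) :
    inSetAltDomain n A σ := by
  intro i j k hij hjk
  simp only [hσ, blockKey, Prod.Lex.toLex_lt_toLex, Fin.lt_def] at hij hjk ⊢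
  rcases blockClass_cases A l r i with ⟨ei, _⟩|⟨ei, _⟩|⟨ei, _⟩|⟨ei, _⟩|⟨ei, _⟩|⟨ei, _⟩ <;>
  rcases blockClass_cases A l r j with ⟨ej, _⟩|⟨ej, _⟩|⟨ej, _⟩|⟨ej, _⟩|⟨ej, _⟩|⟨ej, _⟩ <;>
  rcases blockClass_cases A l r k with ⟨ek, _⟩|⟨ek, _⟩|⟨ek, _⟩|⟨ek, _⟩|⟨ek, _⟩|⟨ek, _⟩ <;>
  rw [ei, ej, ek] <;>
  refine ⟨fun hmem => ?_, fun hmem => ?_⟩ <;> first | omega | simp_all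

theorem exists_mem_setAltDomain_lt_iff_blockKey (n : ℕ) (A : Finset ℕ) (l r : ℕ) :
    ∃ σ ∈ setAltDomain n A, ∀ x y, σ x < σ y ↔ blockKey A l r x < blockKey A l r y := by
  have hkey : Function.Injective (blockKey (n := n) A l r) :=
    fun _ _ h => (Prod.ext_iff.mp (toLex.injective h)).2
  obtain ⟨σ, hσ⟩ := exists_perm_lt_iff_of_injective hkey
  exact ⟨σ, inSetAltDomain_of_lt_iff_blockKey hσ, hσ⟩

def comparisonPattern {n : ℕ} (σ : Equiv.Perm (Fin n)) (a b c : Fin n) : Bool × Bool × Bool :=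
  (decide (σ a < σ b), decide (σ b < σ c), decide (σ a < σ c))

/-- The comparison patterns of `a ≻ b ≻ c`, `a ≻ c ≻ b`, `b ≻ a ≻ c`, and of `c ≻ a ≻ b` if the
middle alternative is in `A`, `b ≻ c ≻ a` otherwise. -/
def allowedPatterns (middleInA : Bool) : Finset (Bool × Bool × Bool) :=
  {(true, true, true), (true, false, true), (false, true, true),
    if middleInA then (true, false, false) else (false, true, false)}

theorem card_allowedPatterns (middleInA : Bool) : (allowedPatterns middleInA).card = 4 := by
  cases middleInA <;> decide

theorem comparisonPattern_mem_allowedPatterns {n : ℕ} {A : Finset ℕ} {σ : Equiv.Perm (Fin n)}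
    (hσ : σ ∈ setAltDomain n A) {a b c : Fin n} (hab : a < b) (hbc : b < c) :
    comparisonPattern σ a b c ∈ allowedPatterns (decide ((b : ℕ) + 1 ∈ A)) := by
  have hσabc := hσ a b c hab hbc
  have hab' := σ.injective.ne hab.ne
  have hbc' := σ.injective.ne hbc.ne
  have hac' := σ.injective.ne (hab.trans hbc).ne
  by_cases hb : (b : ℕ) + 1 ∈ A <;>
  simp [hb, comparisonPattern, allowedPatterns] at hσabc ⊢ <;> omega

theorem mem_comparisonPattern_image_of_mem_allowedPatterns {n : ℕ} {A : Finset ℕ} {a b c : Fin n}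
    (hab : a < b) (hbc : b < c) {p : Bool × Bool × Bool}
    (hp : p ∈ allowedPatterns (decide ((b : ℕ) + 1 ∈ A))) :
    p ∈ (comparisonPattern · a b c) '' setAltDomain n A := by
  suffices ∃ l r : ℕ, ∀ σ : Equiv.Perm (Fin n),
      (∀ x y, σ x < σ y ↔ blockKey A l r x < blockKey A l r y) →
        comparisonPattern σ a b c = p by
    obtain ⟨l, r, hpattern⟩ := this
    obtain ⟨σ, hσD, hσ⟩ := exists_mem_setAltDomain_lt_iff_blockKey n A l r
    exact ⟨σ, hσD, hpattern σ hσ⟩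
  simp only [allowedPatterns, Finset.mem_insert, Finset.mem_singleton] at hp
  rcases hp with rfl | rfl | rfl | rfl
  -- the block `[a, a]` is the identity order
  on_goal 1 => refine ⟨a, a, ?_⟩
  on_goal 2 => refine ⟨b, c, ?_⟩
  on_goal 3 => refine ⟨a, b, ?_⟩
  on_goal 4 => refine ⟨a, c, ?_⟩
  all_goals
    intro σ hσ
    by_cases hb : (b : ℕ) + 1 ∈ A <;>
    simp [comparisonPattern, hσ, blockKey, blockClass, Prod.Lex.toLex_lt_toLex, hb] <;>
    split_ifs <;> omega

theorem comparisonPattern_image_setAltDomain {n : ℕ} (A : Finset ℕ) {a b c : Fin n}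
    (hab : a < b) (hbc : b < c) :
    (comparisonPattern · a b c) '' setAltDomain n A =
      allowedPatterns (decide ((b : ℕ) + 1 ∈ A)) := by
  ext p
  refine ⟨?_, mem_comparisonPattern_image_of_mem_allowedPatterns hab hbc⟩
  rintro ⟨σ, hσ, rfl⟩
  exact comparisonPattern_mem_allowedPatterns hσ hab hbc

theorem stmt0_general (n : ℕ) (A : Finset ℕ)
    (a b c : Fin n) (hab : a < b) (hbc : b < c) :
    Set.ncard ((fun σ : Equiv.Perm (Fin n) =>
        (decide (σ a < σ b), decide (σ b < σ c), decide (σ a < σ c))) ''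
      setAltDomain n A) = 4 := by
  change ((comparisonPattern · a b c) '' setAltDomain n A).ncard = 4
  rw [comparisonPattern_image_setAltDomain A hab hbc, Set.ncard_coe_finset, card_allowedPatterns]

/-- `D_n(A)` is copious: for each triple `a < b < c`, exactly 4 of
the 6 possible restrictions to `{a,b,c}` (encoded by the three pairwise
comparisons) occur among orders of the domain. -/
theorem stmt0 (n : ℕ) (hn : 3 ≤ n) (A : Finset ℕ) (hA : A ⊆ Finset.Icc 1 n)
    (a b c : Fin n) (hab : a < b) (hbc : b < c) :
    Set.ncard ((fun σ : Equiv.Perm (Fin n) =>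
        (decide (σ a < σ b), decide (σ b < σ c), decide (σ a < σ c))) ''
      setAltDomain n A) = 4 :=
  stmt0_general n A a b c hab hbc
end

section
/- For every n ≥ 1 and every A ⊆ [n], the set-alternating domain D_n(A) is a Condorcet domain, and it is a maximal Condorcet domain: every Condorcet domain D' of linear orders on [n] with D_n(A) ⊆ D' satisfies D' = D_n(A). -/
/-- A set `D` of linear orders on `{1,…,n}` is a Condorcet domain: for every
profile of `2m+1` voters with orders from `D`, the majority relation
(`x` beats `y` iff more than `m` voters rank `x` above `y`) is transitive. -/
def IsCondorcetDomain (n : ℕ) (D : Set (Equiv.Perm (Fin n))) : Prop :=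
  ∀ m : ℕ, ∀ P : Fin (2*m+1) → Equiv.Perm (Fin n), (∀ i, P i ∈ D) →
    ∀ x y z : Fin n,
      m < (Finset.univ.filter (fun i => (P i) x < (P i) y)).card →
      m < (Finset.univ.filter (fun i => (P i) y < (P i) z)).card →
      m < (Finset.univ.filter (fun i => (P i) x < (P i) z)).card

/-!
A set of linear orders is a Condorcet domain exactly when it contains no Condorcet cycle, i.e.
no three orders ranking some `x, y, z` as `xyz`, `yzx` and `zxy`: a majority cycle among an odd
number of voters yields such orders because any two strict majorities share a voter, and
conversely these three orders alone form a profile with a cyclic majority. In a Condorcet cycle on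
`i < j < k` each of `i, k` is ranked last by one order and first by another, which the condition
at `j` (1N3 or 3N1) forbids. For maximality, an order violating the condition at `j` ranks the
triple `jki` (with `j ∈ A`), `kij` (with `j ∉ A`) or `kji`, and each of these completes to a
Condorcet cycle with the identity and orders of `D_n(A)` that reorder a single interval of the
identity.
-/

open Finset

section CondorcetCycle

variable {n : ℕ}

def HasCondorcetCycle (D : Set (Equiv.Perm (Fin n))) (x y z : Fin n) : Prop :=
  ∃ σ ∈ D, ∃ τ ∈ D, ∃ ρ ∈ D,
    (σ x < σ y ∧ σ y < σ z) ∧ (τ y < τ z ∧ τ z < τ x) ∧ (ρ z < ρ x ∧ ρ x < ρ y)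

theorem HasCondorcetCycle.rotate {D : Set (Equiv.Perm (Fin n))} {x y z : Fin n}
    (h : HasCondorcetCycle D x y z) : HasCondorcetCycle D y z x := by
  obtain ⟨σ, hσ, τ, hτ, ρ, hρ, hxyz, hyzx, hzxy⟩ := h
  exact ⟨τ, hτ, ρ, hρ, σ, hσ, hyzx, hzxy, hxyz⟩

theorem HasCondorcetCycle.mono {D D' : Set (Equiv.Perm (Fin n))} (hDD' : D ⊆ D')
    {x y z : Fin n} (h : HasCondorcetCycle D x y z) : HasCondorcetCycle D' x y z := by
  obtain ⟨σ, hσ, τ, hτ, ρ, hρ, h⟩ := h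
  exact ⟨σ, hDD' hσ, τ, hDD' hτ, ρ, hDD' hρ, h⟩

theorem card_filter_lt_add_card_filter_gt {N : ℕ} (P : Fin N → Equiv.Perm (Fin n))
    {x y : Fin n} (hxy : x ≠ y) :
    #{v | P v x < P v y} + #{v | P v y < P v x} = N := by
  have hswap : (univ.filter fun v => P v y < P v x) = univ.filter fun v => ¬ P v x < P v y :=
    filter_congr fun v _ => by
      rw [not_lt, le_iff_lt_or_eq, or_iff_left ((P v).injective.ne hxy.symm)]
  rw [hswap, card_filter_add_card_filter_not, card_univ, Fintype.card_fin]

theorem exists_mem_of_majorities {m : ℕ} {S T : Finset (Fin (2 * m + 1))}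
    (hS : m < #S) (hT : m < #T) : ∃ v, v ∈ S ∧ v ∈ T := by
  obtain ⟨v, hv⟩ := inter_nonempty_of_card_lt_card_add_card (subset_univ S) (subset_univ T)
    (by rw [card_univ, Fintype.card_fin]; omega)
  exact ⟨v, mem_inter.mp hv⟩

theorem isCondorcetDomain_iff_forall_not_hasCondorcetCycle {D : Set (Equiv.Perm (Fin n))} :
    IsCondorcetDomain n D ↔ ∀ x y z, ¬ HasCondorcetCycle D x y z := by
  constructor
  · rintro hD x y z ⟨σ, hσ, τ, hτ, ρ, hρ, ⟨hσxy, hσyz⟩, ⟨hτyz, hτzx⟩, ⟨hρzx, hρxy⟩⟩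
    have hxz := hD 1 ![σ, τ, ρ] (by simp [Fin.forall_fin_succ, hσ, hτ, hρ]) x y z
      (by rw [card_filter, Fin.sum_univ_three]; simp [hσxy, hρxy, (hτyz.trans hτzx).asymm])
      (by rw [card_filter, Fin.sum_univ_three]; simp [hσyz, hτyz, (hρzx.trans hρxy).asymm])
    rw [card_filter, Fin.sum_univ_three] at hxz
    by_cases hσxz : σ x < σ z <;> simp [hσxz, hτzx.asymm, hρzx.asymm] at hxz
  · intro hD m P hP x y z hxy hyz
    by_contra hxz
    obtain ⟨a, ha⟩ := exists_mem_of_majorities hxy hyz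
    simp only [mem_filter, mem_univ, true_and] at ha
    have hzx : m < #{v | P v z < P v x} := by
      have := card_filter_lt_add_card_filter_gt P (ne_of_apply_ne (P a) (ha.1.trans ha.2).ne)
      omega
    obtain ⟨b, hb⟩ := exists_mem_of_majorities hyz hzx
    obtain ⟨c, hc⟩ := exists_mem_of_majorities hzx hxy
    simp only [mem_filter, mem_univ, true_and] at hb hc
    exact hD x y z ⟨P a, hP a, P b, hP b, P c, hP c, ha, hb, hc⟩

end CondorcetCycle

theorem exists_perm_lt_iff_lt {n : ℕ} {α : Type*} [LinearOrder α] {κ : Fin n → α}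
    (hκ : Function.Injective κ) : ∃ σ : Equiv.Perm (Fin n), ∀ x y, σ x < σ y ↔ κ x < κ y := by
  refine ⟨(Tuple.sort κ)⁻¹, fun x y => ?_⟩
  have hmono : StrictMono (κ ∘ Tuple.sort κ) :=
    (Tuple.monotone_sort κ).strictMono_of_injective (hκ.comp (Tuple.sort κ).injective)
  simpa using (hmono.lt_iff_lt (a := (Tuple.sort κ)⁻¹ x) (b := (Tuple.sort κ)⁻¹ y)).symm

section SetAltDomain

variable {n : ℕ} {A : Finset ℕ}

theorem one_mem_setAltDomain : (1 : Equiv.Perm (Fin n)) ∈ setAltDomain n A :=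
  fun _ _ _ hij hjk =>
    ⟨fun _ h => (hij.asymm h.1).elim, fun _ h => ((hij.trans hjk).asymm h.1).elim⟩

theorem not_hasCondorcetCycle_setAltDomain_ijk {i j k : Fin n} (hij : i < j) (hjk : j < k) :
    ¬ HasCondorcetCycle (setAltDomain n A) i j k := by
  rintro ⟨-, -, τ, hτ, ρ, hρ, -, ⟨hτjk, hτki⟩, ⟨hρki, hρij⟩⟩
  by_cases hA : (j : ℕ) + 1 ∈ A
  · exact (hτ i j k hij hjk).1 hA ⟨hτjk.trans hτki, hτki⟩
  · exact (hρ i j k hij hjk).2 hA ⟨hρki, hρki.trans hρij⟩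

theorem not_hasCondorcetCycle_setAltDomain_ikj {i j k : Fin n} (hij : i < j) (hjk : j < k) :
    ¬ HasCondorcetCycle (setAltDomain n A) i k j := by
  rintro ⟨-, -, τ, hτ, -, -, -, ⟨hτkj, hτji⟩, -⟩
  by_cases hA : (j : ℕ) + 1 ∈ A
  · exact (hτ i j k hij hjk).1 hA ⟨hτji, hτkj.trans hτji⟩
  · exact (hτ i j k hij hjk).2 hA ⟨hτkj.trans hτji, hτkj⟩

theorem not_hasCondorcetCycle_setAltDomain (x y z : Fin n) :
    ¬ HasCondorcetCycle (setAltDomain n A) x y z := by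
  intro h
  obtain ⟨σ, -, τ, -, -, -, ⟨hσxy, hσyz⟩, ⟨-, hτzx⟩, -⟩ := id h
  have hxy : x ≠ y := ne_of_apply_ne σ hσxy.ne
  have hyz : y ≠ z := ne_of_apply_ne σ hσyz.ne
  have hxz : x ≠ z := ne_of_apply_ne τ hτzx.ne'
  rcases hxy.lt_or_gt with hxy | hxy <;> rcases hyz.lt_or_gt with hyz | hyz <;>
    rcases hxz.lt_or_gt with hxz | hxz
  all_goals first
    | exact absurd (hxy.trans hyz) hxz.asymm
    | exact absurd (hyz.trans hxy) hxz.asymm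
    | exact not_hasCondorcetCycle_setAltDomain_ijk (by assumption) (by assumption) h
    | exact not_hasCondorcetCycle_setAltDomain_ijk (by assumption) (by assumption) h.rotate
    | exact not_hasCondorcetCycle_setAltDomain_ijk (by assumption) (by assumption)
        h.rotate.rotate
    | exact not_hasCondorcetCycle_setAltDomain_ikj (by assumption) (by assumption) h
    | exact not_hasCondorcetCycle_setAltDomain_ikj (by assumption) (by assumption) h.rotate
    | exact not_hasCondorcetCycle_setAltDomain_ikj (by assumption) (by assumption)
        h.rotate.rotate

theorem isCondorcetDomain_setAltDomain : IsCondorcetDomain n (setAltDomain n A) :=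
  isCondorcetDomain_iff_forall_not_hasCondorcetCycle.mpr not_hasCondorcetCycle_setAltDomain

/-- Ranking alternatives by increasing `shiftKey n A q r` keeps those outside `[q, r]` in their
natural order, and lists the interval `[q, r]` as `r` and the `x ∈ (q, r)` with `x + 1 ∉ A`
first, then `q` and the `x ∈ (q, r)` with `x + 1 ∈ A` (each group in increasing order). -/
def shiftKey (n : ℕ) (A : Finset ℕ) (q r x : ℕ) : ℕ :=
  if x < q then x
  else if r < x then 3 * n + x
  else if x ≠ q ∧ (x = r ∨ x + 1 ∉ A) then n + x
  else 2 * n + x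

theorem shiftKey_injOn (q r : ℕ) : Set.InjOn (shiftKey n A q r) (Set.Iio n) := by
  intro x (hx : x < n) y (hy : y < n) h
  simp only [shiftKey] at h
  split_ifs at h <;> omega

theorem shiftKey_not_last {q r a b c : ℕ} (hab : a < b) (hbc : b < c) (hc : c < n)
    (hb : b + 1 ∈ A) :
    ¬ (shiftKey n A q r b < shiftKey n A q r a ∧ shiftKey n A q r c < shiftKey n A q r a) := by
  by_cases ha : a + 1 ∈ A <;> by_cases hc' : c + 1 ∈ A <;>
    simp only [shiftKey, ha, hb, hc', not_true_eq_false, not_false_eq_true, or_false, or_true,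
      and_true] <;>
    split_ifs <;> omega

theorem shiftKey_not_first {q r a b c : ℕ} (hab : a < b) (hbc : b < c) (hc : c < n)
    (hb : b + 1 ∉ A) :
    ¬ (shiftKey n A q r c < shiftKey n A q r a ∧ shiftKey n A q r c < shiftKey n A q r b) := by
  by_cases ha : a + 1 ∈ A <;> by_cases hc' : c + 1 ∈ A <;>
    simp only [shiftKey, ha, hb, hc', not_true_eq_false, not_false_eq_true, or_false, or_true,
      and_true] <;>
    split_ifs <;> omega

theorem exists_mem_setAltDomain_lt_iff_shiftKey_lt (q r : ℕ) :
    ∃ σ ∈ setAltDomain n A, ∀ x y : Fin n,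
      σ x < σ y ↔ shiftKey n A q r x < shiftKey n A q r y := by
  obtain ⟨σ, hσ⟩ := exists_perm_lt_iff_lt (κ := fun x : Fin n => shiftKey n A q r x)
    fun x y h => Fin.ext (shiftKey_injOn q r x.isLt y.isLt h)
  refine ⟨σ, fun i j k hij hjk => ⟨fun hA => ?_, fun hA => ?_⟩, hσ⟩
  · simpa only [hσ] using shiftKey_not_last hij hjk k.isLt hA
  · simpa only [hσ] using shiftKey_not_first hij hjk k.isLt hA

theorem shiftKey_of_lt {q r x : ℕ} (h : x < q) : shiftKey n A q r x = x := if_pos h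

theorem shiftKey_of_gt {q r x : ℕ} (hqr : q ≤ r) (h : r < x) :
    shiftKey n A q r x = 3 * n + x := by
  rw [shiftKey, if_neg (by omega), if_pos h]

theorem shiftKey_self_left {q r : ℕ} (h : q ≤ r) : shiftKey n A q r q = 2 * n + q := by
  rw [shiftKey, if_neg (lt_irrefl q), if_neg h.not_gt, if_neg fun h => h.1 rfl]

theorem shiftKey_self_right {q r : ℕ} (h : q < r) : shiftKey n A q r r = n + r := by
  rw [shiftKey, if_neg h.not_gt, if_neg (lt_irrefl r), if_pos ⟨h.ne', Or.inl rfl⟩]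

theorem shiftKey_of_mem {q r x : ℕ} (hqx : q < x) (hxr : x < r) (hx : x + 1 ∈ A) :
    shiftKey n A q r x = 2 * n + x := by
  rw [shiftKey, if_neg hqx.not_gt, if_neg hxr.not_gt, if_neg fun h => h.2.elim hxr.ne (· hx)]

theorem shiftKey_of_not_mem {q r x : ℕ} (hqx : q < x) (hxr : x < r) (hx : x + 1 ∉ A) :
    shiftKey n A q r x = n + x := by
  rw [shiftKey, if_neg hqx.not_gt, if_neg hxr.not_gt, if_pos ⟨hqx.ne', Or.inr hx⟩]

variable {σ : Equiv.Perm (Fin n)} {i j k : Fin n}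

theorem hasCondorcetCycle_insert_of_jki (hij : i < j) (hjk : j < k) (hA : (j : ℕ) + 1 ∈ A)
    (hσ : σ j < σ k ∧ σ k < σ i) : HasCondorcetCycle (insert σ (setAltDomain n A)) j k i := by
  obtain ⟨τ, hτ, hτlt⟩ := exists_mem_setAltDomain_lt_iff_shiftKey_lt (n := n) (A := A) i k
  refine ⟨σ, Set.mem_insert _ _, τ, Set.mem_insert_of_mem _ hτ,
    1, Set.mem_insert_of_mem _ one_mem_setAltDomain, hσ, ?_, by simpa using ⟨hij, hjk⟩⟩
  rw [hτlt, hτlt, shiftKey_self_right (hij.trans hjk), shiftKey_self_left (hij.trans hjk).le,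
    shiftKey_of_mem hij hjk hA]
  omega

theorem hasCondorcetCycle_insert_of_kij (hij : i < j) (hjk : j < k) (hA : (j : ℕ) + 1 ∉ A)
    (hσ : σ k < σ i ∧ σ i < σ j) : HasCondorcetCycle (insert σ (setAltDomain n A)) k i j := by
  obtain ⟨τ, hτ, hτlt⟩ := exists_mem_setAltDomain_lt_iff_shiftKey_lt (n := n) (A := A) i k
  refine ⟨σ, Set.mem_insert _ _, 1, Set.mem_insert_of_mem _ one_mem_setAltDomain,
    τ, Set.mem_insert_of_mem _ hτ, hσ, by simpa using ⟨hij, hjk⟩, ?_⟩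
  rw [hτlt, hτlt, shiftKey_self_right (hij.trans hjk), shiftKey_self_left (hij.trans hjk).le,
    shiftKey_of_not_mem hij hjk hA]
  omega

theorem hasCondorcetCycle_insert_of_kji (hij : i < j) (hjk : j < k)
    (hσ : σ k < σ j ∧ σ j < σ i) : HasCondorcetCycle (insert σ (setAltDomain n A)) k j i := by
  obtain ⟨τ, hτ, hτlt⟩ := exists_mem_setAltDomain_lt_iff_shiftKey_lt (n := n) (A := A) i j
  obtain ⟨ρ, hρ, hρlt⟩ := exists_mem_setAltDomain_lt_iff_shiftKey_lt (n := n) (A := A) j k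
  refine ⟨σ, Set.mem_insert _ _, τ, Set.mem_insert_of_mem _ hτ,
    ρ, Set.mem_insert_of_mem _ hρ, hσ, ?_, ?_⟩
  · rw [hτlt, hτlt, shiftKey_self_right hij, shiftKey_self_left hij.le, shiftKey_of_gt hij.le hjk]
    omega
  · rw [hρlt, hρlt, shiftKey_self_right hjk, shiftKey_self_left hjk.le, shiftKey_of_lt hij]
    omega

theorem subset_setAltDomain_of_isCondorcetDomain {D : Set (Equiv.Perm (Fin n))}
    (hD : IsCondorcetDomain n D) (hAD : setAltDomain n A ⊆ D) : D ⊆ setAltDomain n A := by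
  intro σ hσD
  by_contra hσA
  have hnoCycle : ∀ x y z, ¬ HasCondorcetCycle (insert σ (setAltDomain n A)) x y z :=
    fun x y z h => isCondorcetDomain_iff_forall_not_hasCondorcetCycle.mp hD x y z
      (h.mono (Set.insert_subset hσD hAD))
  simp only [setAltDomain, Set.mem_ofPred_eq, inSetAltDomain, not_forall] at hσA
  obtain ⟨i, j, k, hij, hjk, hσ⟩ := hσA
  by_cases hA : (j : ℕ) + 1 ∈ A
  · obtain ⟨hji, hki⟩ : σ j < σ i ∧ σ k < σ i := by simpa [hA] using hσ
    rcases (σ.injective.ne hjk.ne).lt_or_gt with hjk' | hkj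
    · exact hnoCycle _ _ _ (hasCondorcetCycle_insert_of_jki hij hjk hA ⟨hjk', hki⟩)
    · exact hnoCycle _ _ _ (hasCondorcetCycle_insert_of_kji hij hjk ⟨hkj, hji⟩)
  · obtain ⟨hki, hkj⟩ : σ k < σ i ∧ σ k < σ j := by simpa [hA] using hσ
    rcases (σ.injective.ne hij.ne).lt_or_gt with hij' | hji
    · exact hnoCycle _ _ _ (hasCondorcetCycle_insert_of_kij hij hjk hA ⟨hki, hij'⟩)
    · exact hnoCycle _ _ _ (hasCondorcetCycle_insert_of_kji hij hjk ⟨hkj, hji⟩)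

end SetAltDomain

theorem stmt1_general (n : ℕ) (A : Finset ℕ) :
    IsCondorcetDomain n (setAltDomain n A) ∧
    ∀ D' : Set (Equiv.Perm (Fin n)), IsCondorcetDomain n D' →
      setAltDomain n A ⊆ D' → D' = setAltDomain n A :=
  ⟨isCondorcetDomain_setAltDomain, fun _ hD' hAD' =>
    (subset_setAltDomain_of_isCondorcetDomain hD' hAD').antisymm hAD'⟩

/-- every set-alternating domain is a Condorcet domain, and a
maximal one. -/
theorem stmt1 (n : ℕ) (hn : 1 ≤ n) (A : Finset ℕ) (hA : A ⊆ Finset.Icc 1 n) :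
    IsCondorcetDomain n (setAltDomain n A) ∧
    ∀ D' : Set (Equiv.Perm (Fin n)), IsCondorcetDomain n D' →
      setAltDomain n A ⊆ D' → D' = setAltDomain n A :=
  stmt1_general n A
end

section
/- For every n ≥ 1 and every A ⊆ [n], the set-alternating domain D_n(A) is connected: for any two orders P, Q ∈ D_n(A) there is a finite sequence P = R_0, R_1, …, R_t = Q with every R_i ∈ D_n(A) and each consecutive pair R_{i−1}, R_i adjacent. -/
/-- Two linear orders are adjacent if they disagree on the relative ranking of
exactly one pair of alternatives. -/
def AdjacentOrders {n : ℕ} (P Q : Equiv.Perm (Fin n)) : Prop :=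
  (Finset.univ.filter (fun p : Fin n × Fin n =>
    p.1 < p.2 ∧ ¬ ((P p.1 < P p.2) ↔ (Q p.1 < Q p.2)))).card = 1

namespace StmtTwoAux

variable {n : ℕ}

/-- The identity order is in every set-alternating domain. -/
lemma one_mem (A : Finset ℕ) : (1 : Equiv.Perm (Fin n)) ∈ setAltDomain n A := by
  intro i j k hij hjk
  constructor
  · intro _ ⟨h1, _⟩
    simp only [Equiv.Perm.one_apply] at h1
    exact absurd h1 (not_lt.mpr hij.le)
  · intro _ ⟨_, h2⟩
    simp only [Equiv.Perm.one_apply] at h2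
    exact absurd h2 (not_lt.mpr hjk.le)

/-- Comparison transfer: swapping two consecutive ranks `p`, `q = p+1` does not
change any comparison involving an alternative not occupying rank `p` or `q`. -/
lemma transfer (σ : Equiv.Perm (Fin n)) (p q : Fin n) (hpq : (q : ℕ) = (p : ℕ) + 1)
    (x y : Fin n) (hxa : x ≠ σ.symm p) (hxb : x ≠ σ.symm q) :
    (((Equiv.swap p q * σ) y < (Equiv.swap p q * σ) x) ↔ σ y < σ x) ∧
    (((Equiv.swap p q * σ) x < (Equiv.swap p q * σ) y) ↔ σ x < σ y) := by
  have hxp : σ x ≠ p := fun h => hxa (by rw [← h, Equiv.symm_apply_apply])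
  have hxq : σ x ≠ q := fun h => hxb (by rw [← h, Equiv.symm_apply_apply])
  have hx' : (Equiv.swap p q * σ) x = σ x := by
    rw [Equiv.Perm.mul_apply, Equiv.swap_apply_of_ne_of_ne hxp hxq]
  have hxp' : (σ x : ℕ) ≠ (p : ℕ) := fun h => hxp (Fin.ext h)
  have hxq' : (σ x : ℕ) ≠ (q : ℕ) := fun h => hxq (Fin.ext h)
  rcases eq_or_ne (σ y) p with hy | hy1
  · rw [hx', Equiv.Perm.mul_apply, hy, Equiv.swap_apply_left]
    constructor <;> (simp only [Fin.lt_def]; omega)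
  rcases eq_or_ne (σ y) q with hy | hy2
  · rw [hx', Equiv.Perm.mul_apply, hy, Equiv.swap_apply_right]
    constructor <;> (simp only [Fin.lt_def]; omega)
  · rw [hx', Equiv.Perm.mul_apply, Equiv.swap_apply_of_ne_of_ne hy1 hy2]
    exact ⟨Iff.rfl, Iff.rfl⟩

/-- Swapping a descent (consecutive ranks whose occupants are out of natural
order) preserves membership in the set-alternating domain. -/
lemma preserve (A : Finset ℕ) (σ : Equiv.Perm (Fin n)) (hσ : σ ∈ setAltDomain n A)
    (p q : Fin n) (hpq : (q : ℕ) = (p : ℕ) + 1) (hba : σ.symm q < σ.symm p) :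
    Equiv.swap p q * σ ∈ setAltDomain n A := by
  set a := σ.symm p with ha
  set b := σ.symm q with hb
  set σ' := Equiv.swap p q * σ with hσ'
  have haq : σ' a = q := by
    rw [hσ', Equiv.Perm.mul_apply, ha, Equiv.apply_symm_apply, Equiv.swap_apply_left]
  have hbp : σ' b = p := by
    rw [hσ', Equiv.Perm.mul_apply, hb, Equiv.apply_symm_apply, Equiv.swap_apply_right]
  have hnab : ¬ (σ' a < σ' b) := by
    rw [haq, hbp]
    simp only [Fin.lt_def]
    omega
  intro i j k hij hjk
  constructor
  · intro hjA ⟨h1, h2⟩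
    by_cases hia : i = a
    · -- then b < i < j, k, so j,k ∉ {a,b}
      have hja : j ≠ a := fun h => absurd hij (by rw [hia, h]; exact lt_irrefl a)
      have hjb : j ≠ b := fun h => absurd hij (by rw [hia, h]; exact not_lt.mpr hba.le)
      have hka : k ≠ a := fun h => absurd (hij.trans hjk) (by rw [hia, h]; exact lt_irrefl a)
      have hkb : k ≠ b := fun h =>
        absurd (hij.trans hjk) (by rw [hia, h]; exact not_lt.mpr hba.le)
      have t1 := (transfer σ p q hpq j i hja hjb).2
      have t2 := (transfer σ p q hpq k i hka hkb).2
      exact (hσ i j k hij hjk).1 hjA ⟨t1.mp h1, t2.mp h2⟩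
    by_cases hib : i = b
    · by_cases hja : j = a
      · exact hnab (by rw [← hja, ← hib]; exact h1)
      by_cases hka : k = a
      · exact hnab (by rw [← hka, ← hib]; exact h2)
      · have hjb : j ≠ b := fun h => absurd hij (by rw [hib, h]; exact lt_irrefl b)
        have hkb : k ≠ b := fun h => absurd (hij.trans hjk) (by rw [hib, h]; exact lt_irrefl b)
        have t1 := (transfer σ p q hpq j i hja hjb).2
        have t2 := (transfer σ p q hpq k i hka hkb).2
        exact (hσ i j k hij hjk).1 hjA ⟨t1.mp h1, t2.mp h2⟩
    · have t1 := (transfer σ p q hpq i j hia hib).1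
      have t2 := (transfer σ p q hpq i k hia hib).1
      exact (hσ i j k hij hjk).1 hjA ⟨t1.mp h1, t2.mp h2⟩
  · intro hjA ⟨h1, h2⟩
    by_cases hka : k = a
    · by_cases hib : i = b
      · exact hnab (by rw [← hka, ← hib]; exact h1)
      by_cases hjb : j = b
      · exact hnab (by rw [← hka, ← hjb]; exact h2)
      · have hia : i ≠ a := fun h => absurd (hij.trans hjk) (by rw [hka, h]; exact lt_irrefl a)
        have hja : j ≠ a := fun h => absurd hjk (by rw [hka, h]; exact lt_irrefl a)
        have t1 := (transfer σ p q hpq i k hia hib).1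
        have t2 := (transfer σ p q hpq j k hja hjb).1
        exact (hσ i j k hij hjk).2 hjA ⟨t1.mp h1, t2.mp h2⟩
    by_cases hkb : k = b
    · -- then i, j < k = b < a
      have hia : i ≠ a := by
        intro h
        have hab : a < b := by rw [← h, ← hkb]; exact hij.trans hjk
        exact absurd hba (not_lt.mpr hab.le)
      have hja : j ≠ a := by
        intro h
        have hab : a < b := by rw [← h, ← hkb]; exact hjk
        exact absurd hba (not_lt.mpr hab.le)
      have hib : i ≠ b := fun h => absurd (hij.trans hjk) (by rw [hkb, h]; exact lt_irrefl b)
      have hjb : j ≠ b := fun h => absurd hjk (by rw [hkb, h]; exact lt_irrefl b)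
      have t1 := (transfer σ p q hpq i k hia hib).1
      have t2 := (transfer σ p q hpq j k hja hjb).1
      exact (hσ i j k hij hjk).2 hjA ⟨t1.mp h1, t2.mp h2⟩
    · have t1 := (transfer σ p q hpq k i hka hkb).2
      have t2 := (transfer σ p q hpq k j hka hkb).2
      exact (hσ i j k hij hjk).2 hjA ⟨t1.mp h1, t2.mp h2⟩

/-- Swapping two consecutive ranks yields an adjacent order. -/
lemma adjacent_swap (σ : Equiv.Perm (Fin n)) (p q : Fin n)
    (hpq : (q : ℕ) = (p : ℕ) + 1) (hba : σ.symm q < σ.symm p) :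
    AdjacentOrders σ (Equiv.swap p q * σ) := by
  set a := σ.symm p with ha
  set b := σ.symm q with hb
  set σ' := Equiv.swap p q * σ with hσ'
  have haq : σ' a = q := by
    rw [hσ', Equiv.Perm.mul_apply, ha, Equiv.apply_symm_apply, Equiv.swap_apply_left]
  have hbp : σ' b = p := by
    rw [hσ', Equiv.Perm.mul_apply, hb, Equiv.apply_symm_apply, Equiv.swap_apply_right]
  have hsa : σ a = p := by rw [ha, Equiv.apply_symm_apply]
  have hsb : σ b = q := by rw [hb, Equiv.apply_symm_apply]
  unfold AdjacentOrders
  rw [Finset.card_eq_one]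
  refine ⟨(b, a), ?_⟩
  ext ⟨x, y⟩
  simp only [Finset.mem_filter, Finset.mem_univ, true_and, Finset.mem_singleton, Prod.mk.injEq]
  constructor
  · rintro ⟨hxy, hne⟩
    by_cases hxa : x = a
    · by_cases hyb : y = b
      · exact absurd (hyb ▸ hxa ▸ hxy) (not_lt.mpr hba.le)
      · have hya : y ≠ a := fun h => absurd hxy (by rw [hxa, h]; exact lt_irrefl a)
        exact absurd (transfer σ p q hpq y x hya hyb).1.symm hne
    by_cases hxb : x = b
    · by_cases hya : y = a
      · exact ⟨hxb, hya⟩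
      · have hyb : y ≠ b := fun h => absurd hxy (by rw [hxb, h]; exact lt_irrefl b)
        exact absurd (transfer σ p q hpq y x hya hyb).1.symm hne
    · exact absurd (transfer σ p q hpq x y hxa hxb).2.symm hne
  · rintro ⟨hx, hy⟩
    subst hx; subst hy
    refine ⟨hba, ?_⟩
    rw [hsa, hsb, hbp, haq]
    simp only [Fin.lt_def]
    omega

lemma adjacent_symm (P Q : Equiv.Perm (Fin n)) (h : AdjacentOrders P Q) :
    AdjacentOrders Q P := by
  unfold AdjacentOrders at *
  rw [show (Finset.univ.filter (fun p : Fin n × Fin n =>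
      p.1 < p.2 ∧ ¬ ((Q p.1 < Q p.2) ↔ (P p.1 < P p.2)))) =
      (Finset.univ.filter (fun p : Fin n × Fin n =>
      p.1 < p.2 ∧ ¬ ((P p.1 < P p.2) ↔ (Q p.1 < Q p.2)))) from ?_]
  · exact h
  · apply Finset.filter_congr
    intro x _
    exact and_congr_right fun _ => not_congr Iff.comm

/-- A permutation whose consecutive values increase is the identity. -/
lemma eq_one_of_consec (τ : Equiv.Perm (Fin n))
    (h : ∀ p q : Fin n, (q : ℕ) = (p : ℕ) + 1 → τ p < τ q) : τ = 1 := by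
  -- first, τ is strictly monotone
  have hmono : ∀ d : ℕ, ∀ i j : Fin n, (j : ℕ) = (i : ℕ) + d + 1 → τ i < τ j := by
    intro d
    induction d with
    | zero => intro i j hj; exact h i j (by omega)
    | succ d ih =>
      intro i j hj
      have hlt : (i : ℕ) + d + 1 < n := by omega
      set m : Fin n := ⟨(i : ℕ) + d + 1, hlt⟩ with hm
      exact (ih i m rfl).trans (h m j (by simp [hm]; omega))
  have hsm : StrictMono τ := by
    intro i j hij
    rcases Fin.lt_def.mp hij with h'
    exact hmono ((j : ℕ) - (i : ℕ) - 1) i j (by omega)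
  -- strictly monotone self-maps of Fin n satisfy i ≤ f i
  have key : ∀ (f : Fin n → Fin n), StrictMono f → ∀ m : ℕ, ∀ i : Fin n,
      (i : ℕ) = m → m ≤ (f i : ℕ) := by
    intro f hf m
    induction m with
    | zero => intro i _; omega
    | succ m ih =>
      intro i hi
      have hm : m < n := by have := i.isLt; omega
      have h1 : f ⟨m, hm⟩ < f i := hf (by rw [Fin.lt_def]; simp only [Fin.val_mk]; omega)
      have h2 := ih ⟨m, hm⟩ rfl
      simp only [Fin.lt_def] at h1
      omega
  have hsymm : StrictMono τ.symm := by
    intro i j hij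
    rcases lt_trichotomy (τ.symm i) (τ.symm j) with h' | h' | h'
    · exact h'
    · exfalso
      have hij' : i = j := by
        have h2 := congrArg τ h'
        rwa [Equiv.apply_symm_apply, Equiv.apply_symm_apply] at h2
      exact absurd hij (hij' ▸ lt_irrefl i)
    · exfalso
      have h2 := hsm h'
      rw [Equiv.apply_symm_apply, Equiv.apply_symm_apply] at h2
      exact absurd hij (not_lt.mpr h2.le)
  ext i
  have h1 := key τ hsm (i : ℕ) i rfl
  have h2 := key τ.symm hsymm ((τ i : ℕ)) (τ i) rfl
  rw [Equiv.symm_apply_apply] at h2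
  simp only [Equiv.Perm.one_apply]
  omega

/-- If `σ ≠ 1` there is a descent between consecutive ranks. -/
lemma exists_descent (σ : Equiv.Perm (Fin n)) (hσ : σ ≠ 1) :
    ∃ p q : Fin n, (q : ℕ) = (p : ℕ) + 1 ∧ σ.symm q < σ.symm p := by
  by_contra hcon
  push_neg at hcon
  have : σ.symm = 1 := by
    apply eq_one_of_consec
    intro p q hpq
    have h1 := hcon p q hpq
    have hne : σ.symm p ≠ σ.symm q := fun h => by
      have := σ.symm.injective h
      rw [Fin.ext_iff] at this
      omega
    exact lt_of_le_of_ne h1 hne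
  exact hσ (by rw [← Equiv.symm_symm σ, this]; rfl)

/-- The inversion set. -/
def invSet (σ : Equiv.Perm (Fin n)) : Finset (Fin n × Fin n) :=
  Finset.univ.filter (fun r => r.1 < r.2 ∧ σ r.2 < σ r.1)

lemma invSet_lt (σ : Equiv.Perm (Fin n)) (p q : Fin n)
    (hpq : (q : ℕ) = (p : ℕ) + 1) (hba : σ.symm q < σ.symm p) :
    (invSet (Equiv.swap p q * σ)).card < (invSet σ).card := by
  set a := σ.symm p with ha
  set b := σ.symm q with hb
  set σ' := Equiv.swap p q * σ with hσ'
  have haq : σ' a = q := by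
    rw [hσ', Equiv.Perm.mul_apply, ha, Equiv.apply_symm_apply, Equiv.swap_apply_left]
  have hbp : σ' b = p := by
    rw [hσ', Equiv.Perm.mul_apply, hb, Equiv.apply_symm_apply, Equiv.swap_apply_right]
  have hsa : σ a = p := by rw [ha, Equiv.apply_symm_apply]
  have hsb : σ b = q := by rw [hb, Equiv.apply_symm_apply]
  apply Finset.card_lt_card
  rw [Finset.ssubset_iff_of_subset]
  · refine ⟨(b, a), ?_, ?_⟩
    · simp only [invSet, Finset.mem_filter, Finset.mem_univ, true_and]
      refine ⟨hba, ?_⟩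
      rw [hsa, hsb]
      simp only [Fin.lt_def]
      omega
    · simp only [invSet, Finset.mem_filter, Finset.mem_univ, true_and, not_and]
      intro _
      rw [haq, hbp]
      simp only [Fin.lt_def, not_lt]
      omega
  · intro ⟨x, y⟩ hxy
    simp only [invSet, Finset.mem_filter, Finset.mem_univ, true_and] at hxy ⊢
    obtain ⟨h1, h2⟩ := hxy
    refine ⟨h1, ?_⟩
    by_cases hxa : x = a
    · by_cases hyb : y = b
      · exact absurd (hyb ▸ hxa ▸ h1) (not_lt.mpr hba.le)
      · have hya : y ≠ a := fun h => absurd h1 (by rw [hxa, h]; exact lt_irrefl a)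
        exact (transfer σ p q hpq y x hya hyb).2.mp h2
    by_cases hxb : x = b
    · by_cases hya : y = a
      · exact absurd h2 (by rw [hxb, hya, haq, hbp]; simp only [Fin.lt_def, not_lt]; omega)
      · have hyb : y ≠ b := fun h => absurd h1 (by rw [hxb, h]; exact lt_irrefl b)
        exact (transfer σ p q hpq y x hya hyb).2.mp h2
    · exact (transfer σ p q hpq x y hxa hxb).1.mp h2

/-- Every member of the domain is connected to the identity within the domain. -/
lemma to_one (A : Finset ℕ) :
    ∀ N : ℕ, ∀ σ : Equiv.Perm (Fin n), (invSet σ).card ≤ N → σ ∈ setAltDomain n A →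
    ∃ t : ℕ, ∃ R : ℕ → Equiv.Perm (Fin n), R 0 = σ ∧ R t = 1 ∧
      (∀ i ≤ t, R i ∈ setAltDomain n A) ∧
      (∀ i < t, AdjacentOrders (R i) (R (i+1))) := by
  intro N
  induction N with
  | zero =>
    intro σ hcard hσ
    have h1 : σ = 1 := by
      by_contra hne
      obtain ⟨p, q, hpq, hba⟩ := exists_descent σ hne
      have : (σ.symm q, σ.symm p) ∈ invSet σ := by
        simp only [invSet, Finset.mem_filter, Finset.mem_univ, true_and]
        refine ⟨hba, ?_⟩
        rw [Equiv.apply_symm_apply, Equiv.apply_symm_apply]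
        simp only [Fin.lt_def]; omega
      have := Finset.card_pos.mpr ⟨_, this⟩
      omega
    exact ⟨0, fun _ => σ, rfl, by rw [h1], fun i _ => hσ, fun i hi => absurd hi (by omega)⟩
  | succ N ih =>
    intro σ hcard hσ
    by_cases h1 : σ = 1
    · exact ⟨0, fun _ => σ, rfl, by rw [h1], fun i _ => hσ, fun i hi => absurd hi (by omega)⟩
    obtain ⟨p, q, hpq, hba⟩ := exists_descent σ h1
    set σ' := Equiv.swap p q * σ with hσ'
    have hmem : σ' ∈ setAltDomain n A := preserve A σ hσ p q hpq hba
    have hlt : (invSet σ').card < (invSet σ).card := invSet_lt σ p q hpq hba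
    obtain ⟨t, R, hR0, hRt, hRmem, hRadj⟩ := ih σ' (by omega) hmem
    refine ⟨t + 1, fun i => if i = 0 then σ else R (i - 1), by simp, ?_, ?_, ?_⟩
    · simp only [Nat.add_sub_cancel, if_neg (Nat.succ_ne_zero t)]
      exact hRt
    · intro i hi
      by_cases h : i = 0
      · simpa [h] using hσ
      · simpa [h] using hRmem (i - 1) (by omega)
    · intro i hi
      by_cases h : i = 0
      · subst h
        simp only [if_pos rfl, if_neg (Nat.one_ne_zero), Nat.sub_self]
        rw [hR0]
        exact adjacent_swap σ p q hpq hba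
      · simp only [if_neg h, if_neg (by omega : i + 1 ≠ 0)]
        have : i + 1 - 1 = (i - 1) + 1 := by omega
        rw [this]
        exact hRadj (i - 1) (by omega)

end StmtTwoAux

/-- every set-alternating domain is connected. -/
theorem stmt2 (n : ℕ) (hn : 1 ≤ n) (A : Finset ℕ) (hA : A ⊆ Finset.Icc 1 n)
    (P Q : Equiv.Perm (Fin n)) (hP : P ∈ setAltDomain n A)
    (hQ : Q ∈ setAltDomain n A) :
    ∃ t : ℕ, ∃ R : ℕ → Equiv.Perm (Fin n), R 0 = P ∧ R t = Q ∧
      (∀ i ≤ t, R i ∈ setAltDomain n A) ∧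
      (∀ i < t, AdjacentOrders (R i) (R (i+1))) := by
  obtain ⟨t1, R1, hP0, hPt, hPmem, hPadj⟩ :=
    StmtTwoAux.to_one A (StmtTwoAux.invSet P).card P le_rfl hP
  obtain ⟨t2, R2, hQ0, hQt, hQmem, hQadj⟩ :=
    StmtTwoAux.to_one A (StmtTwoAux.invSet Q).card Q le_rfl hQ
  refine ⟨t1 + t2, fun i => if i ≤ t1 then R1 i else R2 (t1 + t2 - i), ?_, ?_, ?_, ?_⟩
  · simp [hP0]
  · by_cases h : t1 + t2 ≤ t1
    · have ht2 : t2 = 0 := by omega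
      simp only [if_pos h]
      rw [show t1 + t2 = t1 from by omega, hPt, ← hQt, ht2, hQ0]
    · simp only [if_neg h]
      rw [show t1 + t2 - (t1 + t2) = 0 from by omega, hQ0]
  · intro i hi
    by_cases h : i ≤ t1
    · simpa [h] using hPmem i h
    · simpa [h] using hQmem (t1 + t2 - i) (by omega)
  · intro i hi
    by_cases h : i + 1 ≤ t1
    · simp only [if_pos (by omega : i ≤ t1), if_pos h]
      exact hPadj i (by omega)
    · have hRi : (if i ≤ t1 then R1 i else R2 (t1 + t2 - i)) = R2 (t1 + t2 - i) := by
        by_cases h' : i ≤ t1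
        · have : i = t1 := by omega
          rw [if_pos h', this, hPt, show t1 + t2 - t1 = t2 from by omega, hQt]
        · rw [if_neg h']
      simp only [hRi, if_neg h]
      have hm : t1 + t2 - i = (t1 + t2 - (i + 1)) + 1 := by omega
      rw [hm]
      exact StmtTwoAux.adjacent_symm _ _ (hQadj (t1 + t2 - (i + 1)) (by omega))
end

section
/- For every n ≥ 1, the set of linear orders P on [n] such that every triple i < j < k in [n] satisfies both never conditions — P does not rank i below both j and k, and P does not rank k above both i and j — has cardinality equal to the (n+1)-st Fibonacci number F_{n+1}, where F_1 = F_2 = 1 (so the cardinalities are 1, 2, 3, 5, 8, … for n = 1, 2, 3, 4, 5, …). -/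
open Finset Equiv

def Near {n : ℕ} (σ : Equiv.Perm (Fin n)) : Prop :=
  ∀ i : Fin n, (i : ℕ) ≤ (σ i : ℕ) + 1 ∧ (σ i : ℕ) ≤ (i : ℕ) + 1

lemma card_filter_apply_lt {n : ℕ} (σ : Equiv.Perm (Fin n)) (c : Fin n) :
    (univ.filter (fun x => σ x < c)).card = c := by
  rw [← Fin.card_Iio]
  apply Finset.card_bij (fun x _ => σ x) <;> simp
  intro a ha; exact ⟨σ.symm a, by simpa using ha⟩

lemma card_filter_lt_apply {n : ℕ} (σ : Equiv.Perm (Fin n)) (c : Fin n) :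
    (univ.filter (fun x => c < σ x)).card = n - 1 - c := by
  rw [← Fin.card_Ioi]
  apply Finset.card_bij (fun x _ => σ x) <;> simp [Finset.mem_Ioi]
  intro a ha; exact ⟨σ.symm a, by simpa using ha⟩

lemma cond_iff_near {n : ℕ} (σ : Equiv.Perm (Fin n)) :
    (∀ i j k : Fin n, i < j → j < k →
        ¬ (σ j < σ i ∧ σ k < σ i) ∧ ¬ (σ k < σ i ∧ σ k < σ j)) ↔ Near σ := by
  constructor
  · intro h i
    constructor
    · -- i ≤ σ i + 1
      by_contra hc
      push_neg at hc
      -- hc : σ i + 1 < i, i.e. σ i + 2 ≤ i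
      set t := univ.filter (fun x => σ i < σ x) with ht
      have htc : t.card = n - 1 - (σ i : ℕ) := card_filter_lt_apply σ (σ i)
      have hsplit := Finset.card_filter_add_card_filter_not
        (s := t) (p := fun x => x < i)
      have hneg : (t.filter (fun x => ¬ x < i)).card ≤ n - 1 - (i : ℕ) := by
        rw [← Fin.card_Ioi (a := i)]
        apply Finset.card_le_card
        intro x hx
        simp only [ht, Finset.mem_filter, Finset.mem_univ, true_and, not_lt] at hx
        rw [Finset.mem_Ioi]
        rcases hx with ⟨hx1, hx2⟩
        rcases lt_or_eq_of_le hx2 with h' | h'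
        · exact h'
        · exfalso; rw [h'] at hx1; exact lt_irrefl _ hx1
      have hi : (i : ℕ) ≤ n - 1 := Nat.le_sub_one_of_lt i.isLt
      have hsi : (σ i : ℕ) ≤ n - 1 := Nat.le_sub_one_of_lt (σ i).isLt
      have h2 : 2 ≤ (t.filter (fun x => x < i)).card := by omega
      obtain ⟨a, ha, b, hb, hab⟩ := Finset.one_lt_card.mp (by omega :
        1 < (t.filter (fun x => x < i)).card)
      simp only [ht, Finset.mem_filter, Finset.mem_univ, true_and] at ha hb
      rcases lt_or_gt_of_ne hab with hlt | hlt
      · exact (h a b i hlt hb.2).2 ⟨ha.1, hb.1⟩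
      · exact (h b a i hlt ha.2).2 ⟨hb.1, ha.1⟩
    · -- σ i ≤ i + 1
      by_contra hc
      push_neg at hc
      set t := univ.filter (fun x => σ x < σ i) with ht
      have htc : t.card = (σ i : ℕ) := card_filter_apply_lt σ (σ i)
      have hsplit := Finset.card_filter_add_card_filter_not
        (s := t) (p := fun x => i < x)
      have hneg : (t.filter (fun x => ¬ i < x)).card ≤ (i : ℕ) := by
        rw [← Fin.card_Iio (b := i)]
        apply Finset.card_le_card
        intro x hx
        simp only [ht, Finset.mem_filter, Finset.mem_univ, true_and, not_lt] at hx
        rw [Finset.mem_Iio]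
        rcases hx with ⟨hx1, hx2⟩
        rcases lt_or_eq_of_le hx2 with h' | h'
        · exact h'
        · exfalso; rw [h'] at hx1; exact lt_irrefl _ hx1
      have h2 : 2 ≤ (t.filter (fun x => i < x)).card := by omega
      obtain ⟨a, ha, b, hb, hab⟩ := Finset.one_lt_card.mp (by omega :
        1 < (t.filter (fun x => i < x)).card)
      simp only [ht, Finset.mem_filter, Finset.mem_univ, true_and] at ha hb
      rcases lt_or_gt_of_ne hab with hlt | hlt
      · exact (h i a b ha.2 hlt).1 ⟨ha.1, hb.1⟩
      · exact (h i b a hb.2 hlt).1 ⟨hb.1, ha.1⟩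
  · intro h i j k hij hjk
    have hk1 := (h k).1
    have hi2 := (h i).2
    have hik : (i : ℕ) + 2 ≤ (k : ℕ) := by
      have := Fin.lt_iff_val_lt_val.mp hij
      have := Fin.lt_iff_val_lt_val.mp hjk
      omega
    have key : ¬ σ k < σ i := by
      intro hlt
      have : (σ k : ℕ) < (σ i : ℕ) := hlt
      omega
    exact ⟨fun ⟨_, h2⟩ => key h2, fun ⟨h1, _⟩ => key h1⟩

def g1 {m : ℕ} (e : Equiv.Perm (Fin (m+1))) : Equiv.Perm (Fin (m+2)) :=
  Equiv.Perm.decomposeFin.symm (0, e)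

def g2 {m : ℕ} (f : Equiv.Perm (Fin m)) : Equiv.Perm (Fin (m+2)) :=
  Equiv.Perm.decomposeFin.symm (1, Equiv.Perm.decomposeFin.symm (0, f))

lemma g1_zero {m : ℕ} (e : Equiv.Perm (Fin (m+1))) : g1 e 0 = 0 := by
  simp [g1]

lemma g1_succ {m : ℕ} (e : Equiv.Perm (Fin (m+1))) (i : Fin (m+1)) :
    g1 e i.succ = (e i).succ := by
  simp [g1, Equiv.Perm.decomposeFin_symm_apply_succ]

lemma g2_zero {m : ℕ} (f : Equiv.Perm (Fin m)) : g2 f 0 = 1 := by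
  simp [g2]

lemma g2_one {m : ℕ} (f : Equiv.Perm (Fin m)) : g2 f 1 = 0 := by
  have h : (1 : Fin (m+2)) = (0 : Fin (m+1)).succ := rfl
  rw [g2, h, Equiv.Perm.decomposeFin_symm_apply_succ]
  simp

lemma g2_succ_succ {m : ℕ} (f : Equiv.Perm (Fin m)) (j : Fin m) :
    g2 f j.succ.succ = (f j).succ.succ := by
  rw [g2, Equiv.Perm.decomposeFin_symm_apply_succ,
    Equiv.Perm.decomposeFin_symm_apply_succ]
  apply Equiv.swap_apply_of_ne_of_ne
  · exact Fin.succ_ne_zero _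
  · intro h
    have := congrArg Fin.val h
    simp [Fin.val_succ] at this

lemma near_g1 {m : ℕ} (e : Equiv.Perm (Fin (m+1))) : Near (g1 e) ↔ Near e := by
  constructor
  · intro h i
    have := h i.succ
    rw [g1_succ] at this
    simp only [Fin.val_succ] at this
    omega
  · intro h i
    refine Fin.cases ?_ ?_ i
    · rw [g1_zero]; simp
    · intro j
      have := h j
      rw [g1_succ]
      simp only [Fin.val_succ]
      omega

lemma near_g2 {m : ℕ} (f : Equiv.Perm (Fin m)) : Near (g2 f) ↔ Near f := by
  constructor
  · intro h i
    have := h i.succ.succ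
    rw [g2_succ_succ] at this
    simp only [Fin.val_succ] at this
    omega
  · intro h i
    refine Fin.cases ?_ (fun j => Fin.cases ?_ ?_ j) i
    · rw [g2_zero]; simp
    · rw [show (0 : Fin (m+1)).succ = (1 : Fin (m+2)) from rfl, g2_one]; simp
    · intro j
      have := h j
      rw [g2_succ_succ]
      simp only [Fin.val_succ]
      omega

lemma g1_inj {m : ℕ} : Function.Injective (g1 (m := m)) := by
  intro a b hab
  have := Equiv.Perm.decomposeFin.symm.injective hab
  exact (Prod.mk.injEq _ _ _ _).mp this |>.2

lemma g2_inj {m : ℕ} : Function.Injective (g2 (m := m)) := by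
  intro a b hab
  have h1 := Equiv.Perm.decomposeFin.symm.injective hab
  have h2 := (Prod.mk.injEq _ _ _ _).mp h1 |>.2
  have h3 := Equiv.Perm.decomposeFin.symm.injective h2
  exact (Prod.mk.injEq _ _ _ _).mp h3 |>.2

lemma near_split {m : ℕ} :
    {σ : Equiv.Perm (Fin (m+2)) | Near σ} =
      g1 '' {e | Near e} ∪ g2 '' {f | Near f} := by
  ext σ
  simp only [Set.mem_setOf_eq, Set.mem_union, Set.mem_image]
  constructor
  · intro h
    obtain ⟨⟨p, e⟩, rfl⟩ := Equiv.Perm.decomposeFin.symm.surjective σ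
    have hp : (p : ℕ) ≤ 1 := by
      have := (h 0).2
      simpa using this
    interval_cases hpv : (p : ℕ)
    · -- p = 0
      have hp0 : p = 0 := Fin.ext (by simp [hpv])
      subst hp0
      left
      exact ⟨e, (near_g1 e).mp h, rfl⟩
    · -- p = 1
      have hp1 : p = 1 := Fin.ext (by simp [hpv])
      subst hp1
      set σ : Equiv.Perm (Fin (m+2)) := Equiv.Perm.decomposeFin.symm (1, e) with hσ
      have hσ1 : σ 1 = 0 := by
        have hne : σ.symm 0 ≠ 0 := by
          intro hc
          have h' := congrArg σ hc
          rw [Equiv.apply_symm_apply, hσ] at h'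
          simp at h'
        have hle : ((σ.symm 0 : Fin (m+2)) : ℕ) ≤ 1 := by
          have := (h (σ.symm 0)).1
          simp at this
          omega
        have : σ.symm 0 = 1 := by
          have h0 : ((σ.symm 0 : Fin (m+2)) : ℕ) ≠ 0 := by
            intro hc; exact hne (Fin.ext hc)
          exact Fin.ext (by omega)
        rw [← this]; simp
      obtain ⟨⟨q, f⟩, rfl⟩ := Equiv.Perm.decomposeFin.symm.surjective e
      have hq : q = 0 := by
        have h1 : σ 1 = Equiv.swap 0 1 q.succ := by
          rw [hσ, show (1 : Fin (m+2)) = (0 : Fin (m+1)).succ from rfl,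
            Equiv.Perm.decomposeFin_symm_apply_succ]
          simp
        rw [hσ1] at h1
        have h2 : q.succ = (1 : Fin (m+2)) := by
          have h3 := congrArg (Equiv.swap (0 : Fin (m+2)) 1) h1
          symm; simpa using h3
        exact Fin.succ_injective _ (by rw [h2]; rfl)
      subst hq
      right
      exact ⟨f, (near_g2 f).mp h, rfl⟩
  · rintro (⟨e, he, rfl⟩ | ⟨f, hf, rfl⟩)
    · exact (near_g1 e).mpr he
    · exact (near_g2 f).mpr hf

lemma near_count (n : ℕ) :
    {σ : Equiv.Perm (Fin n) | Near σ}.ncard = Nat.fib (n+1) := by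
  induction n using Nat.strong_induction_on with
  | _ n IH =>
    match n with
    | 0 =>
      have h : {σ : Equiv.Perm (Fin 0) | Near σ} = Set.univ := by
        ext σ
        simp only [Set.mem_setOf_eq, Set.mem_univ, iff_true]
        intro i
        exact i.elim0
      rw [h, Set.ncard_univ, Nat.card_eq_fintype_card]
      simp
    | 1 =>
      have h : {σ : Equiv.Perm (Fin 1) | Near σ} = Set.univ := by
        ext σ
        simp only [Set.mem_setOf_eq, Set.mem_univ, iff_true]
        intro i
        have hi : σ i = i := Subsingleton.elim _ _
        rw [hi]
        omega
      rw [h, Set.ncard_univ, Nat.card_eq_fintype_card]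
      simp
    | (m+2) =>
      have hdisj : Disjoint (g1 '' {e : Equiv.Perm (Fin (m+1)) | Near e})
          (g2 '' {f : Equiv.Perm (Fin m) | Near f}) := by
        rw [Set.disjoint_left]
        rintro σ ⟨e, _, rfl⟩ ⟨f, _, hf⟩
        have h0 : (1 : Fin (m+2)) = 0 := by
          rw [← g2_zero f, hf, g1_zero]
        exact one_ne_zero h0
      rw [near_split, Set.ncard_union_eq hdisj (Set.toFinite _) (Set.toFinite _),
        Set.ncard_image_of_injective _ g1_inj, Set.ncard_image_of_injective _ g2_inj,
        IH (m+1) (by omega), IH m (by omega)]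
      conv_rhs => rw [show m + 2 + 1 = m + 1 + 2 from rfl, Nat.fib_add_two]
      have hfib : Nat.fib (m + 1 + 1) = Nat.fib (m + 2) := rfl
      omega


/-- the number of linear orders on `{1,…,n}` satisfying both the
never-bottom (1N3) and never-top (3N1) conditions for every triple `i < j < k`
is the `(n+1)`-st Fibonacci number. -/
theorem stmt3 (n : ℕ) (hn : 1 ≤ n) :
    Set.ncard {σ : Equiv.Perm (Fin n) | ∀ i j k : Fin n, i < j → j < k →
        ¬ (σ j < σ i ∧ σ k < σ i) ∧ ¬ (σ k < σ i ∧ σ k < σ j)}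
      = Nat.fib (n+1) := by
  have h : {σ : Equiv.Perm (Fin n) | ∀ i j k : Fin n, i < j → j < k →
      ¬ (σ j < σ i ∧ σ k < σ i) ∧ ¬ (σ k < σ i ∧ σ k < σ j)} = {σ | Near σ} := by
    ext σ
    exact cond_iff_near σ
  rw [h, near_count]
end

section
/- Let n ≥ 2 and let A ⊆ [n] be nonempty with max A = n−1. Then f_n(A) = 2·f_{n−1}(A \ {n−1}). -/
section aux
variable (p : ℕ) (A : Finset ℕ)

def extLast (τ : Equiv.Perm (Fin (p+1))) : Equiv.Perm (Fin (p+2)) :=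
  (finSuccEquivLast.permCongr).symm τ.optionCongr

lemma extLast_castSucc (τ : Equiv.Perm (Fin (p+1))) (i : Fin (p+1)) :
    extLast p τ (Fin.castSucc i) = Fin.castSucc (τ i) := by
  simp [extLast, Equiv.permCongr_def, finSuccEquivLast_castSucc]

lemma extLast_last (τ : Equiv.Perm (Fin (p+1))) :
    extLast p τ (Fin.last (p+1)) = Fin.last (p+1) := by
  simp [extLast, Equiv.permCongr_def, finSuccEquivLast_last]

lemma extLast_injective : Function.Injective (extLast p) := by
  intro τ τ' h
  ext i
  have := congrArg (fun σ : Equiv.Perm (Fin (p+2)) => σ (Fin.castSucc i)) h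
  simp only [extLast_castSucc] at this
  exact congrArg Fin.val (Fin.castSucc_injective _ this)

lemma extLast_surj (σ : Equiv.Perm (Fin (p+2)))
    (hlast : σ (Fin.last (p+1)) = Fin.last (p+1)) :
    ∃ τ, extLast p τ = σ := by
  set e : Equiv.Perm (Option (Fin (p+1))) := finSuccEquivLast.permCongr σ with he
  refine ⟨Equiv.removeNone e, ?_⟩
  apply Equiv.ext
  intro x
  induction x using Fin.lastCases with
  | last => rw [extLast_last, hlast]
  | cast i =>
    have hne : σ (Fin.castSucc i) ≠ Fin.last (p+1) := by
      intro h
      exact absurd (σ.injective (h.trans hlast.symm)) (Fin.castSucc_lt_last i).ne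
    obtain ⟨c, hc⟩ : ∃ c, σ (Fin.castSucc i) = Fin.castSucc c :=
      ⟨(σ (Fin.castSucc i)).castPred hne, (Fin.castSucc_castPred _ _).symm⟩
    have hei : e (some i) = some c := by
      rw [he, Equiv.permCongr_apply, finSuccEquivLast_symm_some, hc,
        finSuccEquivLast_castSucc]
    have hrn : some (Equiv.removeNone e i) = e (some i) :=
      Equiv.removeNone_some e ⟨c, hei⟩
    rw [hei] at hrn
    have hrc : Equiv.removeNone e i = c := Option.some_injective _ hrn
    rw [extLast_castSucc, hrc]
    exact hc.symm

lemma extLast_mem (τ : Equiv.Perm (Fin (p+1)))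
    (hτ : τ ∈ setAltDomain (p+1) (A.erase (p+1))) :
    extLast p τ ∈ setAltDomain (p+2) A := by
  intro i j k hij hjk
  by_cases hk : (k : ℕ) = p + 1
  · have hkl : k = Fin.last (p+1) := Fin.ext hk
    have h1 : extLast p τ k = Fin.last (p+1) := by rw [hkl, extLast_last]
    constructor
    · rintro - ⟨-, h⟩; rw [h1] at h; exact (Fin.le_last _).not_gt h
    · rintro - ⟨h, -⟩; rw [h1] at h; exact (Fin.le_last _).not_gt h
  · have hkv : (k : ℕ) < p + 1 := by have := k.isLt; omega
    have hjv : (j : ℕ) < (k : ℕ) := hjk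
    have hiv : (i : ℕ) < (j : ℕ) := hij
    have ei : extLast p τ i = (τ ⟨i, by omega⟩).castSucc := extLast_castSucc p τ ⟨i, by omega⟩
    have ej : extLast p τ j = (τ ⟨j, by omega⟩).castSucc := extLast_castSucc p τ ⟨j, by omega⟩
    have ek : extLast p τ k = (τ ⟨k, by omega⟩).castSucc := extLast_castSucc p τ ⟨k, by omega⟩
    rw [ei, ej, ek]
    have H := hτ ⟨i, by omega⟩ ⟨j, by omega⟩ ⟨k, by omega⟩
      (Fin.mk_lt_mk.mpr hiv) (Fin.mk_lt_mk.mpr hjv)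
    simp only [Fin.castSucc_lt_castSucc_iff]
    constructor
    · intro hA
      exact H.1 (Finset.mem_erase.mpr ⟨by simp only [Fin.val_mk]; omega, hA⟩)
    · intro hA
      exact H.2 (fun hmem => hA (Finset.mem_of_mem_erase hmem))

lemma res_mem (σ : Equiv.Perm (Fin (p+2))) (hσ : σ ∈ setAltDomain (p+2) A)
    (τ : Equiv.Perm (Fin (p+1)))
    (h : ∀ i, σ (Fin.castSucc i) = Fin.castSucc (τ i)) :
    τ ∈ setAltDomain (p+1) (A.erase (p+1)) := by
  intro i j k hij hjk
  have H := hσ (Fin.castSucc i) (Fin.castSucc j) (Fin.castSucc k)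
    (by simpa using hij) (by simpa using hjk)
  rw [h i, h j, h k] at H
  simp only [Fin.castSucc_lt_castSucc_iff, Fin.coe_castSucc] at H
  have hjv : (j : ℕ) + 1 ≤ p := by
    have h1 : (j : ℕ) < (k : ℕ) := hjk
    have := k.isLt; omega
  constructor
  · intro hA; exact H.1 (Finset.mem_of_mem_erase hA)
  · intro hA
    exact H.2 (fun hmem => hA (Finset.mem_erase.mpr ⟨by omega, hmem⟩))


lemma swap_mem (hp1 : p + 1 ∈ A) (σ : Equiv.Perm (Fin (p+2)))
    (hσ : σ ∈ setAltDomain (p+2) A) :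
    (Equiv.swap (⟨p, by omega⟩ : Fin (p+2)) ⟨p+1, by omega⟩).trans σ
      ∈ setAltDomain (p+2) A := by
  set a : Fin (p+2) := ⟨p, by omega⟩ with ha
  set b : Fin (p+2) := ⟨p+1, by omega⟩ with hb
  intro i j k hij hjk
  simp only [Equiv.trans_apply]
  have hkv : (k : ℕ) < p + 2 := k.isLt
  have hjv : (j : ℕ) < (k : ℕ) := hjk
  have hiv : (i : ℕ) < (j : ℕ) := hij
  have hia : i ≠ a := by intro h; have := congrArg Fin.val h; simp [ha] at this; omega
  have hib : i ≠ b := by intro h; have := congrArg Fin.val h; simp [hb] at this; omega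
  rw [Equiv.swap_apply_of_ne_of_ne hia hib]
  by_cases hk : (k : ℕ) = p + 1
  · have hkb : k = b := Fin.ext hk
    by_cases hj : (j : ℕ) = p
    · have hja : j = a := Fin.ext hj
      rw [hkb, hja, Equiv.swap_apply_left, Equiv.swap_apply_right]
      have H := hσ i a b (Fin.lt_def.mpr (by simp [ha]; omega))
        (Fin.lt_def.mpr (by simp [ha, hb]))
      constructor
      · rintro - ⟨h1, h2⟩
        exact H.1 (by simpa [ha] using hp1) ⟨h2, h1⟩
      · intro hmem
        exact absurd (by simpa [ha] using hp1) hmem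
    · have hja : j ≠ a := by intro h; exact hj (congrArg Fin.val h)
      have hjb : j ≠ b := by intro h; have := congrArg Fin.val h; simp [hb] at this; omega
      rw [hkb, Equiv.swap_apply_right, Equiv.swap_apply_of_ne_of_ne hja hjb]
      exact hσ i j a hij (Fin.lt_def.mpr (by simp [ha]; omega))
  · have hja : j ≠ a := by
      intro h; have := congrArg Fin.val h; simp [ha] at this; omega
    have hjb : j ≠ b := by
      intro h; have := congrArg Fin.val h; simp [hb] at this; omega
    rw [Equiv.swap_apply_of_ne_of_ne hja hjb]
    by_cases hk2 : (k : ℕ) = p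
    · have hka : k = a := Fin.ext hk2
      rw [hka, Equiv.swap_apply_left]
      exact hσ i j b hij (Fin.lt_def.mpr (by simp [hb]; omega))
    · have hka : k ≠ a := by intro h; exact hk2 (congrArg Fin.val h)
      have hkb : k ≠ b := by intro h; exact hk (congrArg Fin.val h)
      rw [Equiv.swap_apply_of_ne_of_ne hka hkb]
      exact hσ i j k hij hjk

lemma top_last (hp1 : p + 1 ∈ A) (σ : Equiv.Perm (Fin (p+2)))
    (hσ : σ ∈ setAltDomain (p+2) A)
    (hab : σ ⟨p, by omega⟩ < σ ⟨p+1, by omega⟩) :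
    σ ⟨p+1, by omega⟩ = Fin.last (p+1) := by
  set a : Fin (p+2) := ⟨p, by omega⟩ with ha
  set b : Fin (p+2) := ⟨p+1, by omega⟩ with hb
  by_contra hne
  have hblt : σ b < Fin.last (p+1) := lt_of_le_of_ne (Fin.le_last _) hne
  set c : Fin (p+2) := σ.symm (Fin.last (p+1)) with hcdef
  have hc : σ c = Fin.last (p+1) := σ.apply_symm_apply _
  have hcb : c ≠ b := by intro h; rw [h] at hc; exact hne hc
  have hca : c ≠ a := by
    intro h; rw [h] at hc; rw [hc] at hab
    exact absurd hab (Fin.le_last _).not_gt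
  have hcv : (c : ℕ) < p := by
    have h1 : (c : ℕ) < p + 2 := c.isLt
    have h2 : (c : ℕ) ≠ p + 1 := fun h => hcb (Fin.ext (by simpa [hb] using h))
    have h3 : (c : ℕ) ≠ p := fun h => hca (Fin.ext (by simpa [ha] using h))
    omega
  have H := (hσ c a b (Fin.lt_def.mpr (by simp [ha]; omega))
    (Fin.lt_def.mpr (by simp [ha, hb]))).1 (by simpa [ha] using hp1)
  exact H ⟨hc ▸ lt_trans hab hblt, hc ▸ hblt⟩

end aux

/-- if `max A = n-1`, then `f_n(A) = 2·f_{n-1}(A \ {n-1})`. -/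
theorem stmt5 (n : ℕ) (hn : 2 ≤ n) (A : Finset ℕ) (hA : A ⊆ Finset.Icc 1 n)
    (hne : A.Nonempty) (hmax : A.max' hne = n - 1) :
    fsize n A = 2 * fsize (n-1) (A.erase (n-1)) := by
  obtain ⟨p, rfl⟩ : ∃ p, n = p + 2 := ⟨n - 2, by omega⟩
  have hn1 : p + 2 - 1 = p + 1 := rfl
  rw [hn1]
  have hp1 : p + 1 ∈ A := by
    have h := A.max'_mem hne
    rwa [hmax, hn1] at h
  set a : Fin (p+2) := ⟨p, by omega⟩ with ha
  set b : Fin (p+2) := ⟨p+1, by omega⟩ with hb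
  set D := setAltDomain (p+2) A with hD
  set Dp : Set (Equiv.Perm (Fin (p+2))) := {σ ∈ D | σ a < σ b} with hDp
  set Dm : Set (Equiv.Perm (Fin (p+2))) := {σ ∈ D | σ b < σ a} with hDm
  have hab : a ≠ b := by
    intro h; have := congrArg Fin.val h; simp [ha, hb] at this
  have hunion : D = Dp ∪ Dm := by
    ext σ
    simp only [hDp, hDm, Set.mem_union, Set.mem_sep_iff]
    constructor
    · intro h
      rcases lt_or_gt_of_ne (fun he => hab (σ.injective he)) with h1 | h1
      · exact Or.inl ⟨h, h1⟩
      · exact Or.inr ⟨h, h1⟩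
    · rintro (⟨h, -⟩ | ⟨h, -⟩) <;> exact h
  have hdisj : Disjoint Dp Dm := by
    rw [Set.disjoint_left]
    rintro σ ⟨-, h1⟩ ⟨-, h2⟩
    exact lt_asymm h1 h2
  set J : Equiv.Perm (Fin (p+2)) → Equiv.Perm (Fin (p+2)) :=
    fun σ => (Equiv.swap a b).trans σ with hJ
  have hJJ : ∀ σ, J (J σ) = σ := by
    intro σ; ext x
    simp [hJ, Equiv.swap_apply_self]
  have hJmem : ∀ σ, σ ∈ D → J σ ∈ D := fun σ h => swap_mem p A hp1 σ h
  have hJab : ∀ σ : Equiv.Perm (Fin (p+2)), J σ a = σ b ∧ J σ b = σ a := by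
    intro σ
    constructor
    · simp [hJ, Equiv.swap_apply_left]
    · simp [hJ, Equiv.swap_apply_right]
  have hDm_eq : Dm = J '' Dp := by
    ext σ
    constructor
    · rintro ⟨hσ, hlt⟩
      refine ⟨J σ, ⟨hJmem σ hσ, ?_⟩, hJJ σ⟩
      rw [(hJab σ).1, (hJab σ).2]
      exact hlt
    · rintro ⟨τ, ⟨hτ, hlt⟩, rfl⟩
      refine ⟨hJmem τ hτ, ?_⟩
      rw [(hJab τ).1, (hJab τ).2]
      exact hlt
  have hJinj : Function.Injective J := Function.LeftInverse.injective hJJ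
  have hDp_eq : Dp = extLast p '' setAltDomain (p+1) (A.erase (p+1)) := by
    ext σ
    constructor
    · rintro ⟨hσ, hlt⟩
      have hlast : σ (Fin.last (p+1)) = Fin.last (p+1) := top_last p A hp1 σ hσ hlt
      obtain ⟨τ, rfl⟩ := extLast_surj p σ hlast
      exact ⟨τ, res_mem p A _ hσ τ (fun i => extLast_castSucc p τ i), rfl⟩
    · rintro ⟨τ, hτ, rfl⟩
      refine ⟨extLast_mem p A τ hτ, ?_⟩
      have h1 : extLast p τ a = Fin.castSucc (τ ⟨p, by omega⟩) :=
        extLast_castSucc p τ ⟨p, by omega⟩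
      have h2 : extLast p τ b = Fin.last (p+1) := extLast_last p τ
      rw [h1, h2]
      exact Fin.castSucc_lt_last _
  have e1 : fsize (p+2) A = Dp.ncard + Dm.ncard := by
    rw [fsize, ← hD, hunion, Set.ncard_union_eq hdisj (Set.toFinite _) (Set.toFinite _)]
  have e2 : Dm.ncard = Dp.ncard := by
    rw [hDm_eq, Set.ncard_image_of_injective _ hJinj]
  have e3 : Dp.ncard = fsize (p+1) (A.erase (p+1)) := by
    rw [hDp_eq, Set.ncard_image_of_injective _ (extLast_injective p), fsize]
  omega
end

section
/- Let n ≥ 3 and let A ⊆ [n] be nonempty with w = max A satisfying 1 < w < n−1, and set A' = A \ {w}. Then f_n(A) = 2·f_{n−1}(A) + f_{n−1}(A') − Σ_{j=w−1}^{n−2} f_j(A'). -/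
/-!
Sort the orders of `D_{m+1}(X)` by their last-ranked alternative `b`. Any `j ∈ X` with
`b < j ≤ m` would make the triple `(b, j, m+1)` violate 1N3; the alternatives above `b` must be
ranked in increasing order, and if `b ∉ X` also below all alternatives under `b`. Deleting `b`
is thus a bijection onto the orders of `D_m(X \ {b})` obeying these constraints. For `b > max X`
the alternatives above `b` form a sorted tail, and deleting it leaves an arbitrary order of
`D_{b-1}(X)`. For `b = w = max A` one gets `g_m`, the number of orders of `D_m(A')` ranking
`w, …, m` increasingly. Hence `f_{m+1}(A) = g_m + Σ_{j=w}^{m} f_j(A)`, and the same decomposition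
of `D_{k+1}(A')` and of its orders ranking `w, …, k+1` increasingly gives
`g_{k+1} - g_k = f_{k+1}(A') - Σ_{j=w-1}^{k} f_j(A')`. Comparing the first identity for
`m = k + 1` and `m = k`, where `n = k + 2`, yields the theorem.
-/

open Finset Equiv

section

open Classical

noncomputable def setAltFinset (m : ℕ) (X : Finset ℕ) : Finset (Perm (Fin m)) :=
  univ.filter (inSetAltDomain m X)

variable {m t : ℕ} {X : Finset ℕ}

lemma mem_setAltFinset {σ : Perm (Fin m)} : σ ∈ setAltFinset m X ↔ inSetAltDomain m X σ := by
  simp [setAltFinset]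

lemma fsize_eq_card_setAltFinset (m : ℕ) (X : Finset ℕ) :
    fsize m X = (setAltFinset m X).card := by
  rw [fsize, ← Set.ncard_coe_finset]
  congr 1
  ext σ
  simp [setAltDomain, mem_setAltFinset]

def RankedInOrder (R : ℕ → ℕ → Prop) (π : Perm (Fin m)) : Prop :=
  ∀ y z : Fin m, y < z → R y z → π y < π z

abbrev AscendingFrom (t : ℕ) : Perm (Fin m) → Prop :=
  RankedInOrder fun y _ => t ≤ y

/-- The alternatives of index `≥ t` fill the bottom positions, in increasing order. -/
abbrev SortedTail (t : ℕ) : Perm (Fin m) → Prop :=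
  RankedInOrder fun _ z => t ≤ z

lemma SortedTail.ascendingFrom {π : Perm (Fin m)} (h : SortedTail t π) : AscendingFrom t π :=
  fun y z hyz hy => h y z hyz (hy.trans hyz.le)

lemma SortedTail.apply_last {σ : Perm (Fin (m + 1))} (h : SortedTail t σ) (ht : t ≤ m) :
    σ (Fin.last m) = Fin.last m := by
  by_contra hne
  have hlt : σ.symm (Fin.last m) < Fin.last m :=
    Fin.lt_last_iff_ne_last.mpr fun he => hne (by rw [← he, apply_symm_apply, he])
  have := h _ _ hlt (by simpa using ht)
  rw [apply_symm_apply] at this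
  exact (Fin.le_last _).not_gt this

def insertBottom (a : Fin (m + 1)) (π : Perm (Fin m)) : Perm (Fin (m + 1)) :=
  (finSuccEquiv' a).trans ((optionCongr π).trans (finSuccEquiv' (Fin.last m)).symm)

@[simp] lemma insertBottom_apply_self (a : Fin (m + 1)) (π : Perm (Fin m)) :
    insertBottom a π a = Fin.last m := by
  simp [insertBottom, finSuccEquiv'_at, finSuccEquiv'_symm_none]

@[simp] lemma insertBottom_apply_succAbove (a : Fin (m + 1)) (π : Perm (Fin m)) (y : Fin m) :
    insertBottom a π (a.succAbove y) = (π y).castSucc := by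
  simp [insertBottom, finSuccEquiv'_succAbove, finSuccEquiv'_symm_some, Fin.succAbove_last]

lemma insertBottom_injective (a : Fin (m + 1)) : Function.Injective (insertBottom (m := m) a) :=
  fun π π' h => Equiv.ext fun y => Fin.castSucc_injective _ <| by
    simpa using congrArg (· (a.succAbove y)) h

lemma exists_insertBottom_eq {a : Fin (m + 1)} {σ : Perm (Fin (m + 1))}
    (h : σ a = Fin.last m) : ∃ π, insertBottom a π = σ := by
  set e : Perm (Option (Fin m)) :=
    (finSuccEquiv' a).symm.trans (σ.trans (finSuccEquiv' (Fin.last m)))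
  have he : e none = none := by simp [e, finSuccEquiv'_symm_none, h, finSuccEquiv'_at]
  have hopt : optionCongr (removeNone e) = e := by
    ext1 x
    simp [he]
  refine ⟨removeNone e, Equiv.ext fun x => ?_⟩
  simp [insertBottom, hopt, e]

variable {a : Fin (m + 1)} {π : Perm (Fin m)}

lemma succAbove_add_one_mem_iff (hX : ∀ x ∈ X, x ≤ a + 1) (y : Fin m) :
    (a.succAbove y : ℕ) + 1 ∈ X ↔ (y : ℕ) + 1 ∈ X.erase (a + 1) := by
  rcases lt_or_ge (y : ℕ) a with hy | hy
  · rw [Fin.succAbove_of_castSucc_lt _ _ (by simpa [Fin.lt_def] using hy), Fin.val_castSucc,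
      mem_erase]
    exact ⟨fun h => ⟨by omega, h⟩, And.right⟩
  · rw [Fin.succAbove_of_le_castSucc _ _ (by simpa [Fin.le_def] using hy), Fin.val_succ, mem_erase]
    constructor
    · intro h; have := hX _ h; omega
    · rintro ⟨hne, h⟩; have := hX _ h; omega

lemma insertBottom_succAbove_lt_iff {y z : Fin m} :
    insertBottom a π (a.succAbove y) < insertBottom a π (a.succAbove z) ↔ π y < π z := by
  simp

lemma insertBottom_succAbove_lt_self (y : Fin m) :
    insertBottom a π (a.succAbove y) < insertBottom a π a := by
  simp [Fin.castSucc_lt_last]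

lemma apply_lt_apply_of_not_lt {y z : Fin m} (h : ¬ π z < π y) (hyz : y < z) : π y < π z :=
  lt_of_le_of_ne (not_lt.mp h) (π.injective.ne hyz.ne)

lemma inSetAltDomain_of_insertBottom (hX : ∀ x ∈ X, x ≤ a + 1)
    (h : inSetAltDomain (m + 1) X (insertBottom a π)) : inSetAltDomain m (X.erase (a + 1)) π := by
  intro i j k hij hjk
  simpa only [succAbove_add_one_mem_iff hX, insertBottom_succAbove_lt_iff] using
    h _ _ _ (Fin.strictMono_succAbove a hij) (Fin.strictMono_succAbove a hjk)

lemma ascendingFrom_of_insertBottom (hX : ∀ x ∈ X, x ≤ a + 1)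
    (h : inSetAltDomain (m + 1) X (insertBottom a π)) : AscendingFrom a π := by
  intro y z hyz hy
  have hname : (a.succAbove y : ℕ) + 1 ∉ X := by
    rw [succAbove_add_one_mem_iff hX, mem_erase]
    rintro ⟨hne, hy'⟩
    have := hX _ hy'
    omega
  have := (h a _ (a.succAbove z)
    ((Fin.lt_succAbove_iff_le_castSucc _ _).mpr (by simpa [Fin.le_def] using hy))
    (Fin.strictMono_succAbove a hyz)).2 hname
  rw [insertBottom_succAbove_lt_iff] at this
  exact apply_lt_apply_of_not_lt (fun h' => this ⟨insertBottom_succAbove_lt_self z, h'⟩) hyz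

lemma sortedTail_of_insertBottom (hX : ∀ x ∈ X, x ≤ a + 1)
    (h : inSetAltDomain (m + 1) X (insertBottom a π)) (ha : (a : ℕ) + 1 ∉ X) :
    SortedTail a π := by
  intro y z hyz hz
  rcases lt_or_ge (y : ℕ) a with hy | hy
  · have := (h (a.succAbove y) a (a.succAbove z)
      ((Fin.succAbove_lt_iff_castSucc_lt _ _).mpr (by simpa [Fin.lt_def] using hy))
      ((Fin.lt_succAbove_iff_le_castSucc _ _).mpr (by simpa [Fin.le_def] using hz))).2 ha
    rw [insertBottom_succAbove_lt_iff] at this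
    exact apply_lt_apply_of_not_lt (fun h' => this ⟨h', insertBottom_succAbove_lt_self z⟩) hyz
  · exact ascendingFrom_of_insertBottom hX h y z hyz hy

lemma inSetAltDomain_insertBottom (hX : ∀ x ∈ X, x ≤ a + 1)
    (hπ : inSetAltDomain m (X.erase (a + 1)) π) (hasc : AscendingFrom a π)
    (htail : (a : ℕ) + 1 ∉ X → SortedTail a π) :
    inSetAltDomain (m + 1) X (insertBottom a π) := by
  have not_lt_self (x : Fin (m + 1)) : ¬ insertBottom a π a < insertBottom a π x := by
    simpa using Fin.le_last _
  intro i j k hij hjk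
  rcases eq_or_ne a i with rfl | hi
  · obtain ⟨y, rfl⟩ := Fin.exists_succAbove_eq hij.ne'
    obtain ⟨z, rfl⟩ := Fin.exists_succAbove_eq (hij.trans hjk).ne'
    have hy : (a : ℕ) ≤ y := by
      simpa [Fin.le_def] using (Fin.lt_succAbove_iff_le_castSucc _ _).mp hij
    have hyz := Fin.succAbove_lt_succAbove_iff.mp hjk
    refine ⟨fun hmem => ?_, fun _ ⟨_, hzy⟩ => ?_⟩
    · rw [succAbove_add_one_mem_iff hX, mem_erase] at hmem
      have := hX _ hmem.2
      omega
    · rw [insertBottom_succAbove_lt_iff] at hzy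
      exact (hasc y z hyz hy).not_gt hzy
  rcases eq_or_ne a j with rfl | hj
  · obtain ⟨y, rfl⟩ := Fin.exists_succAbove_eq hij.ne
    obtain ⟨z, rfl⟩ := Fin.exists_succAbove_eq hjk.ne'
    refine ⟨fun _ ⟨hji, _⟩ => not_lt_self _ hji, fun hmem ⟨hzy, _⟩ => ?_⟩
    rw [insertBottom_succAbove_lt_iff] at hzy
    refine (htail hmem y z (Fin.succAbove_lt_succAbove_iff.mp (hij.trans hjk)) ?_).not_gt hzy
    simpa [Fin.le_def] using (Fin.lt_succAbove_iff_le_castSucc _ _).mp hjk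
  rcases eq_or_ne a k with rfl | hk
  · exact ⟨fun _ ⟨_, hki⟩ => not_lt_self _ hki, fun _ ⟨hki, _⟩ => not_lt_self _ hki⟩
  obtain ⟨y₁, rfl⟩ := Fin.exists_succAbove_eq hi.symm
  obtain ⟨y₂, rfl⟩ := Fin.exists_succAbove_eq hj.symm
  obtain ⟨y₃, rfl⟩ := Fin.exists_succAbove_eq hk.symm
  simpa only [succAbove_add_one_mem_iff hX, insertBottom_succAbove_lt_iff] using
    hπ y₁ y₂ y₃ (Fin.succAbove_lt_succAbove_iff.mp hij)
      (Fin.succAbove_lt_succAbove_iff.mp hjk)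

theorem inSetAltDomain_insertBottom_iff (hX : ∀ x ∈ X, x ≤ a + 1) :
    inSetAltDomain (m + 1) X (insertBottom a π) ↔
      inSetAltDomain m (X.erase (a + 1)) π ∧ AscendingFrom a π ∧
        ((a : ℕ) + 1 ∉ X → SortedTail a π) :=
  ⟨fun h => ⟨inSetAltDomain_of_insertBottom hX h, ascendingFrom_of_insertBottom hX h,
      sortedTail_of_insertBottom hX h⟩,
    fun ⟨hπ, hasc, htail⟩ => inSetAltDomain_insertBottom hX hπ hasc htail⟩

@[simp] lemma insertBottom_last_apply_castSucc (π : Perm (Fin m)) (y : Fin m) :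
    insertBottom (Fin.last m) π y.castSucc = (π y).castSucc := by
  simpa [Fin.succAbove_last] using insertBottom_apply_succAbove (Fin.last m) π y

lemma rankedInOrder_insertBottom_last_iff {R : ℕ → ℕ → Prop} :
    RankedInOrder R (insertBottom (Fin.last m) π) ↔ RankedInOrder R π := by
  constructor
  · intro h y z hyz hR
    simpa using h y.castSucc z.castSucc (Fin.castSucc_lt_castSucc_iff.mpr hyz) hR
  · intro h y z hyz hR
    induction z using Fin.lastCases with
    | last =>
      obtain ⟨y, rfl⟩ := Fin.exists_castSucc_eq.mpr hyz.ne
      simp [Fin.castSucc_lt_last]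
    | cast z =>
      obtain ⟨y, rfl⟩ := Fin.exists_castSucc_eq.mpr (hyz.trans (Fin.castSucc_lt_last z)).ne
      simpa using h y z (Fin.castSucc_lt_castSucc_iff.mp hyz) hR

lemma apply_lt_last_of_ne {σ : Perm (Fin (m + 1))} (h : σ a = Fin.last m) {x : Fin (m + 1)}
    (hx : x ≠ a) : σ x < Fin.last m :=
  Fin.lt_last_iff_ne_last.mpr fun hc => hx (σ.injective (hc.trans h.symm))

/-- The orders of `D_{m+1}(X)` ranking the alternative of index `v` (alternative `v + 1`) last. -/
noncomputable def bottomFiber (m : ℕ) (X : Finset ℕ) (v : ℕ) : Finset (Perm (Fin (m + 1))) :=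
  (setAltFinset (m + 1) X).filter fun σ => (σ.symm (Fin.last m) : ℕ) = v

lemma mem_bottomFiber_iff {σ : Perm (Fin (m + 1))} :
    σ ∈ bottomFiber m X a ↔ inSetAltDomain (m + 1) X σ ∧ σ a = Fin.last m := by
  simp only [bottomFiber, mem_filter, mem_setAltFinset, Fin.val_inj, Equiv.symm_apply_eq,
    eq_comm (a := Fin.last m)]

lemma bottomFiber_eq_map (hX : ∀ x ∈ X, x ≤ a + 1) :
    bottomFiber m X a = ((setAltFinset m (X.erase (a + 1))).filter fun π =>
      AscendingFrom a π ∧ ((a : ℕ) + 1 ∉ X → SortedTail a π)).map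
        ⟨insertBottom a, insertBottom_injective a⟩ := by
  ext σ
  simp only [mem_bottomFiber_iff, mem_map, mem_filter, mem_setAltFinset,
    Function.Embedding.coeFn_mk]
  constructor
  · rintro ⟨hσ, hlast⟩
    obtain ⟨π, rfl⟩ := exists_insertBottom_eq hlast
    exact ⟨π, (inSetAltDomain_insertBottom_iff hX).mp hσ, rfl⟩
  · rintro ⟨π, hπ, rfl⟩
    exact ⟨(inSetAltDomain_insertBottom_iff hX).mpr hπ, insertBottom_apply_self a π⟩

lemma bottomFiber_last (hX : ∀ x ∈ X, x ≤ m) :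
    bottomFiber m X m = (setAltFinset m X).map
      ⟨insertBottom (Fin.last m), insertBottom_injective _⟩ := by
  have hX' : ∀ x ∈ X, x ≤ (Fin.last m : ℕ) + 1 := fun x hx => by
    simpa using (hX x hx).trans m.le_succ
  have hm : (Fin.last m : ℕ) + 1 ∉ X := fun h => by have := hX _ h; simp at this
  change bottomFiber m X (Fin.last m : ℕ) = _
  rw [bottomFiber_eq_map hX', erase_eq_of_notMem hm, filter_true_of_mem]
  exact fun π _ => ⟨fun y _ _ hy => absurd hy (by simp), fun _ _ z _ hz => absurd hz (by simp)⟩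

lemma card_filter_eq_sum_bottomFiber (Q : Perm (Fin (m + 1)) → Prop) :
    ((setAltFinset (m + 1) X).filter Q).card =
      ∑ v ∈ range (m + 1), ((bottomFiber m X v).filter Q).card := by
  rw [card_eq_sum_card_fiberwise (f := fun σ => (σ.symm (Fin.last m) : ℕ)) (t := range (m + 1))
    fun σ _ => mem_range.mpr (Fin.is_lt _)]
  refine sum_congr rfl fun v _ => ?_
  rw [bottomFiber, filter_filter, filter_filter]
  simp_rw [and_comm]

lemma card_filter_sortedTail (hX : ∀ x ∈ X, x ≤ t) :
    ∀ m, t ≤ m → ((setAltFinset m X).filter (SortedTail t)).card = fsize t X := by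
  refine Nat.le_induction ?_ fun m hm ih => ?_
  · rw [fsize_eq_card_setAltFinset, filter_true_of_mem]
    exact fun π _ _ z _ hz => absurd hz (not_le.mpr z.isLt)
  have hfiber : (setAltFinset (m + 1) X).filter (SortedTail t) =
      (bottomFiber m X m).filter (SortedTail t) := by
    ext σ
    simp only [bottomFiber, mem_filter]
    refine ⟨fun ⟨hσ, hs⟩ => ⟨⟨hσ, ?_⟩, hs⟩, fun h => ⟨h.1.1, h.2⟩⟩
    rw [(σ.symm_apply_eq).mpr (hs.apply_last hm).symm, Fin.val_last]
  rw [hfiber, bottomFiber_last fun x hx => (hX x hx).trans hm, filter_map, card_map, ← ih]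
  exact congrArg card <| filter_congr fun π _ =>
    show SortedTail t (insertBottom _ π) ↔ _ from rankedInOrder_insertBottom_last_iff

lemma card_bottomFiber_of_le {v : ℕ} (hX : ∀ x ∈ X, x ≤ v) (hv : v ≤ m) :
    (bottomFiber m X v).card = fsize v X := by
  obtain ⟨a, rfl⟩ : ∃ a : Fin (m + 1), (a : ℕ) = v := ⟨⟨v, by omega⟩, rfl⟩
  have ha : (a : ℕ) + 1 ∉ X := fun h => by have := hX _ h; omega
  rw [bottomFiber_eq_map fun x hx => (hX x hx).trans (Nat.le_succ _), card_map,
    erase_eq_of_notMem ha, ← card_filter_sortedTail hX m hv]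
  exact congrArg card (filter_congr fun π _ =>
    ⟨fun h => h.2 ha, fun h => ⟨h.ascendingFrom, fun _ => h⟩⟩)

lemma card_bottomFiber_of_mem (hw : t + 1 ∈ X) (hX : ∀ x ∈ X, x ≤ t + 1) (ht : t ≤ m) :
    (bottomFiber m X t).card =
      ((setAltFinset m (X.erase (t + 1))).filter (AscendingFrom t)).card := by
  obtain ⟨a, rfl⟩ : ∃ a : Fin (m + 1), (a : ℕ) = t := ⟨⟨t, by omega⟩, rfl⟩
  rw [bottomFiber_eq_map hX, card_map]
  exact congrArg card <| filter_congr fun π _ =>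
    ⟨And.left, fun h => ⟨h, fun hn => absurd hw hn⟩⟩

lemma bottomFiber_eq_empty {w v : ℕ} (hw : w ∈ X) (hwm : w ≤ m) (hv : v + 1 < w) :
    bottomFiber m X v = ∅ := by
  refine eq_empty_iff_forall_notMem.mpr fun σ hσv => ?_
  obtain ⟨hσ, rfl⟩ := mem_filter.mp hσv
  set a := σ.symm (Fin.last m)
  have hlast : σ a = Fin.last m := σ.apply_symm_apply _
  let j : Fin (m + 1) := ⟨w - 1, by omega⟩
  have haj : a < j := Fin.lt_def.mpr (by simp [j]; omega)
  have hj : j < Fin.last m := Fin.lt_def.mpr (by simp [j]; omega)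
  have hjX : (j : ℕ) + 1 ∈ X := by simpa [j, Nat.sub_add_cancel (by omega : 1 ≤ w)] using hw
  refine (mem_setAltFinset.mp hσ a j _ haj hj).1 hjX ⟨?_, ?_⟩
  · rw [hlast]
    exact apply_lt_last_of_ne hlast haj.ne'
  · rw [hlast]
    exact apply_lt_last_of_ne hlast (haj.trans hj).ne'

lemma ascendingFrom_of_mem_bottomFiber {v : ℕ} {σ : Perm (Fin (m + 1))}
    (hX : ∀ x ∈ X, x ≤ t) (hσv : σ ∈ bottomFiber m X v) (hv : v < t) :
    AscendingFrom t σ := by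
  obtain ⟨hσ, rfl⟩ := mem_filter.mp hσv
  set a := σ.symm (Fin.last m)
  have hlast : σ a = Fin.last m := σ.apply_symm_apply _
  intro y z hyz hy
  have hay : a < y := Fin.lt_def.mpr (by omega)
  have hname : (y : ℕ) + 1 ∉ X := fun h => by have := hX _ h; omega
  have := (mem_setAltFinset.mp hσ a y z hay hyz).2 hname
  rw [hlast] at this
  exact apply_lt_apply_of_not_lt
    (fun h => this ⟨apply_lt_last_of_ne hlast (hay.trans hyz).ne', h⟩) hyz

lemma bottomFiber_filter_ascendingFrom_eq_empty {v : ℕ} (ht : t ≤ v) (hv : v < m) :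
    (bottomFiber m X v).filter (AscendingFrom t) = ∅ := by
  refine eq_empty_iff_forall_notMem.mpr fun σ hσ => ?_
  obtain ⟨hσ, hasc⟩ := mem_filter.mp hσ
  obtain ⟨-, rfl⟩ := mem_filter.mp hσ
  have := hasc _ (Fin.last m) (Fin.lt_def.mpr (by simpa using hv)) ht
  rw [apply_symm_apply] at this
  exact (Fin.le_last _).not_gt this

lemma fsize_succ_eq_sum (hX : ∀ x ∈ X, x ≤ t) (ht : t ≤ m + 1) :
    fsize (m + 1) X =
      ∑ v ∈ range t, (bottomFiber m X v).card + ∑ j ∈ Icc t m, fsize j X := by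
  have h := card_filter_eq_sum_bottomFiber (m := m) (X := X) fun _ => True
  simp only [filter_true] at h
  rw [fsize_eq_card_setAltFinset, h, ← sum_range_add_sum_Ico _ ht, Ico_add_one_right_eq_Icc]
  congr 1
  refine sum_congr rfl fun j hj => ?_
  exact card_bottomFiber_of_le (fun x hx => (hX x hx).trans (mem_Icc.mp hj).1) (mem_Icc.mp hj).2

lemma card_filter_ascendingFrom_succ (hX : ∀ x ∈ X, x ≤ t) (ht : t ≤ m) :
    ((setAltFinset (m + 1) X).filter (AscendingFrom t)).card =
      ∑ v ∈ range t, (bottomFiber m X v).card +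
        ((setAltFinset m X).filter (AscendingFrom t)).card := by
  have hlow : ∀ v ∈ range t,
      ((bottomFiber m X v).filter (AscendingFrom t)).card = (bottomFiber m X v).card :=
    fun v hv => congrArg card <| filter_true_of_mem fun σ hσ =>
      ascendingFrom_of_mem_bottomFiber hX hσ (mem_range.mp hv)
  have hmid : ∀ v ∈ Ico t m, ((bottomFiber m X v).filter (AscendingFrom t)).card = 0 :=
    fun v hv => card_eq_zero.mpr <|
      bottomFiber_filter_ascendingFrom_eq_empty (mem_Ico.mp hv).1 (mem_Ico.mp hv).2
  have htop : ((bottomFiber m X m).filter (AscendingFrom t)).card =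
      ((setAltFinset m X).filter (AscendingFrom t)).card := by
    rw [bottomFiber_last fun x hx => (hX x hx).trans ht, filter_map, card_map]
    exact congrArg card <| filter_congr fun π _ =>
      show AscendingFrom t (insertBottom _ π) ↔ _ from rankedInOrder_insertBottom_last_iff
  rw [card_filter_eq_sum_bottomFiber, ← sum_range_add_sum_Ico _ (ht.trans m.le_succ),
    sum_Ico_succ_top ht, sum_congr rfl hlow, sum_congr rfl hmid, sum_const_zero, zero_add, htop]

lemma fsize_succ_eq_of_max (hw : t + 1 ∈ X) (hX : ∀ x ∈ X, x ≤ t + 1) (ht : t < m) :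
    fsize (m + 1) X = ((setAltFinset m (X.erase (t + 1))).filter (AscendingFrom t)).card +
      ∑ j ∈ Icc (t + 1) m, fsize j X := by
  rw [fsize_succ_eq_sum hX (by omega), sum_range_succ,
    sum_eq_zero fun v hv => card_eq_zero.mpr (bottomFiber_eq_empty hw ht (by simpa using hv)),
    zero_add, card_bottomFiber_of_mem hw hX ht.le]

end

theorem stmt6_general (n : ℕ) (A : Finset ℕ)
    (hne : A.Nonempty) (w : ℕ) (hw : w = A.max' hne) (hw1 : 1 < w)
    (hw2 : w < n - 1) :
    (fsize n A : ℤ)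
      = 2 * (fsize (n-1) A : ℤ) + (fsize (n-1) (A.erase w) : ℤ)
        - ∑ j ∈ Finset.Icc (w-1) (n-2), (fsize j (A.erase w) : ℤ) := by
  have hwA : w ∈ A := hw ▸ A.max'_mem hne
  have hAw : ∀ x ∈ A, x ≤ w := fun x hx => hw ▸ A.le_max' x hx
  obtain ⟨t, rfl⟩ : ∃ t, w = t + 1 := ⟨w - 1, by omega⟩
  obtain ⟨k, rfl⟩ : ∃ k, n = k + 1 + 1 := ⟨n - 2, by omega⟩
  have hA' : ∀ x ∈ A.erase (t + 1), x ≤ t := fun x hx => by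
    have := hAw x (mem_of_mem_erase hx)
    have := ne_of_mem_erase hx
    omega
  have e₁ := fsize_succ_eq_of_max (m := k + 1) hwA hAw (by omega)
  have e₂ := fsize_succ_eq_of_max (m := k) hwA hAw (by omega)
  have e₃ := fsize_succ_eq_sum (m := k) hA' (by omega)
  have e₄ := card_filter_ascendingFrom_succ (m := k) hA' (by omega)
  rw [sum_Icc_succ_top (by omega)] at e₁
  simp only [Nat.add_sub_cancel, show k + 1 + 1 - 2 = k by omega]
  push_cast [← Nat.cast_sum]
  omega

/-- if `w = max A` with `1 < w < n-1` and `A' = A \ {w}`, then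
`f_n(A) = 2·f_{n-1}(A) + f_{n-1}(A') - Σ_{j=w-1}^{n-2} f_j(A')`. -/
theorem stmt6 (n : ℕ) (hn : 3 ≤ n) (A : Finset ℕ) (hA : A ⊆ Finset.Icc 1 n)
    (hne : A.Nonempty) (w : ℕ) (hw : w = A.max' hne) (hw1 : 1 < w)
    (hw2 : w < n - 1) :
    (fsize n A : ℤ)
      = 2 * (fsize (n-1) A : ℤ) + (fsize (n-1) (A.erase w) : ℤ)
        - ∑ j ∈ Finset.Icc (w-1) (n-2), (fsize j (A.erase w) : ℤ) :=
  stmt6_general n A hne w hw hw1 hw2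
end

section
/- Let n ≥ 2 and A ⊆ [n]. If n−1 ∈ A, then f_n(A \ {n−1}) ≥ f_n(A). If 2 ∉ A, then f_n(A ∪ {2}) ≥ f_n(A). -/
/-! ### Auxiliary: the "bump" permutation -/

def bumpFun (N : ℕ) (t : Fin (N+3)) (x : Fin (N+3)) : Fin (N+3) :=
  if h : (x:ℕ) = N+2 then t
  else if (x:ℕ) < (t:ℕ) then x else ⟨(x:ℕ)+1, by have := x.isLt; omega⟩

lemma bumpFun_val (N : ℕ) (t x : Fin (N+3)) :
    ((bumpFun N t x : Fin (N+3)) : ℕ) =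
      if (x:ℕ) = N+2 then (t:ℕ) else if (x:ℕ) < (t:ℕ) then (x:ℕ) else (x:ℕ)+1 := by
  unfold bumpFun
  split_ifs <;> rfl

lemma bumpFun_inj (N : ℕ) (t : Fin (N+3)) : Function.Injective (bumpFun N t) := by
  intro x y h
  have hx := x.isLt; have hy := y.isLt; have ht := t.isLt
  have h' := congrArg Fin.val h
  rw [bumpFun_val, bumpFun_val] at h'
  split_ifs at h' <;> exact Fin.val_inj.mp (by omega)

noncomputable def bump (N : ℕ) (t : Fin (N+3)) : Equiv.Perm (Fin (N+3)) :=
  Equiv.ofBijective _ (Finite.injective_iff_bijective.mp (bumpFun_inj N t))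

lemma bump_val (N : ℕ) (t x : Fin (N+3)) :
    ((bump N t x : Fin (N+3)) : ℕ) =
      if (x:ℕ) = N+2 then (t:ℕ) else if (x:ℕ) < (t:ℕ) then (x:ℕ) else (x:ℕ)+1 :=
  bumpFun_val N t x

def aIdx (N : ℕ) : Fin (N+3) := ⟨N+1, by omega⟩
def bIdx (N : ℕ) : Fin (N+3) := ⟨N+2, by omega⟩

@[simp] lemma aIdx_val (N : ℕ) : ((aIdx N : Fin (N+3)) : ℕ) = N+1 := rfl
@[simp] lemma bIdx_val (N : ℕ) : ((bIdx N : Fin (N+3)) : ℕ) = N+2 := rfl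

/-! ### Dichotomy: in `D(A)` with `n-1 ∈ A`, the worst alternative is `a` or `b` -/

lemma top_ab (N : ℕ) (A : Finset ℕ) (hA : N+2 ∈ A) (σ : Equiv.Perm (Fin (N+3)))
    (hσ : inSetAltDomain (N+3) A σ) :
    (σ (aIdx N) : ℕ) = N+2 ∨ (σ (bIdx N) : ℕ) = N+2 := by
  by_contra hcon
  push_neg at hcon
  obtain ⟨h1, h2⟩ := hcon
  set c : Fin (N+3) := σ.symm ⟨N+2, by omega⟩ with hc
  have hσc : σ c = ⟨N+2, by omega⟩ := Equiv.apply_symm_apply σ _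
  have hca : c ≠ aIdx N := by intro h; rw [h] at hσc; rw [hσc] at h1; exact h1 rfl
  have hcb : c ≠ bIdx N := by intro h; rw [h] at hσc; rw [hσc] at h2; exact h2 rfl
  have hcN : (c:ℕ) ≤ N := by
    have := c.isLt
    have h3 : (c:ℕ) ≠ N+1 := fun h => hca (Fin.val_inj.mp h)
    have h4 : (c:ℕ) ≠ N+2 := fun h => hcb (Fin.val_inj.mp h)
    omega
  have hcab : c < aIdx N := Fin.lt_def.mpr (by simp; omega)
  have hab : aIdx N < bIdx N := Fin.lt_def.mpr (by simp)
  have hcond := (hσ c (aIdx N) (bIdx N) hcab hab).1 (by simpa using hA)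
  apply hcond
  have hσa := (σ (aIdx N)).isLt
  have hσb := (σ (bIdx N)).isLt
  constructor
  · exact Fin.lt_def.mpr (by rw [hσc]; simp; omega)
  · exact Fin.lt_def.mpr (by rw [hσc]; simp; omega)

/-! ### The two branches of the injection -/

lemma mem_branch1 (N : ℕ) (A : Finset ℕ) (σ : Equiv.Perm (Fin (N+3)))
    (hσ : inSetAltDomain (N+3) A σ)
    (hP : (σ (bIdx N):ℕ) = N+2 ∨ ((σ (aIdx N):ℕ) = N+2 ∧ (σ (bIdx N):ℕ) = N+1)) :
    inSetAltDomain (N+3) (A.erase (N+2)) σ := by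
  intro i j k hij hjk
  have hij' := Fin.lt_def.mp hij
  have hjk' := Fin.lt_def.mp hjk
  have hklt := k.isLt
  by_cases hj : (j:ℕ) = N+1
  · have hkv : (k:ℕ) = N+2 := by omega
    have hja : j = aIdx N := Fin.val_inj.mp (by simp [hj])
    have hkb : k = bIdx N := Fin.val_inj.mp (by simp [hkv])
    constructor
    · intro hmem
      exfalso
      have he : ((j:ℕ)+1) = N+2 := by omega
      rw [he] at hmem
      exact Finset.notMem_erase _ _ hmem
    · intro _
      rintro ⟨hlt1, hlt2⟩
      rw [hkb] at hlt1 hlt2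
      rw [hja] at hlt2
      have l1 := Fin.lt_def.mp hlt1
      have l2 := Fin.lt_def.mp hlt2
      rcases hP with hP | ⟨hPa, hPb⟩
      · have := (σ i).isLt; omega
      · have hieq : σ i = σ (aIdx N) := Fin.val_inj.mp (by have := (σ i).isLt; omega)
        have hi : i = aIdx N := σ.injective hieq
        rw [hi, hja] at hij
        exact lt_irrefl _ hij
  · have hjv : (j:ℕ) ≤ N := by omega
    have h0 := hσ i j k hij hjk
    constructor
    · intro hmem
      exact h0.1 (Finset.mem_erase.mp hmem).2
    · intro hmem
      exact h0.2 (fun hmemA => hmem (Finset.mem_erase.mpr ⟨by omega, hmemA⟩))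

lemma mem_branch2 (N : ℕ) (A : Finset ℕ) (σ : Equiv.Perm (Fin (N+3)))
    (hσ : inSetAltDomain (N+3) A σ)
    (hatop : (σ (aIdx N):ℕ) = N+2) (hbt : (σ (bIdx N):ℕ) ≤ N) :
    inSetAltDomain (N+3) (A.erase (N+2)) (σ.trans (bump N (σ (bIdx N)))) := by
  have hne : ∀ x : Fin (N+3), x ≠ aIdx N → (σ x:ℕ) ≠ N+2 := by
    intro x hx h
    exact hx (σ.injective (Fin.val_inj.mp (h.trans hatop.symm)))
  have hval : ∀ x : Fin (N+3), x ≠ aIdx N →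
      (((σ.trans (bump N (σ (bIdx N)))) x : Fin (N+3)) : ℕ) =
        if (σ x:ℕ) < (σ (bIdx N):ℕ) then (σ x:ℕ) else (σ x:ℕ)+1 := by
    intro x hx
    rw [Equiv.trans_apply, bump_val, if_neg (hne x hx)]
  have hvala : (((σ.trans (bump N (σ (bIdx N)))) (aIdx N) : Fin (N+3)) : ℕ) = (σ (bIdx N):ℕ) := by
    rw [Equiv.trans_apply, bump_val, if_pos hatop]
  have hbna : bIdx N ≠ aIdx N := by
    intro h; have := congrArg Fin.val h; simp at this
  have hmono : ∀ x y : Fin (N+3), x ≠ aIdx N → y ≠ aIdx N →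
      ((σ.trans (bump N (σ (bIdx N)))) x < (σ.trans (bump N (σ (bIdx N)))) y ↔ σ x < σ y) := by
    intro x y hx hy
    rw [Fin.lt_def, Fin.lt_def, hval x hx, hval y hy]
    split_ifs <;> omega
  have htopa : ∀ x : Fin (N+3), x ≠ aIdx N → x ≠ bIdx N →
      ((σ.trans (bump N (σ (bIdx N)))) (aIdx N) < (σ.trans (bump N (σ (bIdx N)))) x ↔
        σ (bIdx N) < σ x) := by
    intro x hx hxb
    rw [Fin.lt_def, Fin.lt_def, hvala, hval x hx]
    have hne2 : (σ x:ℕ) ≠ (σ (bIdx N):ℕ) := fun h => hxb (σ.injective (Fin.val_inj.mp h))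
    split_ifs <;> omega
  intro i j k hij hjk
  have hij' := Fin.lt_def.mp hij
  have hjk' := Fin.lt_def.mp hjk
  have hklt := k.isLt
  by_cases hj : (j:ℕ) = N+1
  · have hkv : (k:ℕ) = N+2 := by omega
    have hja : j = aIdx N := Fin.val_inj.mp (by simp [hj])
    have hkb : k = bIdx N := Fin.val_inj.mp (by simp [hkv])
    constructor
    · intro hmem
      exfalso
      have he : ((j:ℕ)+1) = N+2 := by omega
      rw [he] at hmem
      exact Finset.notMem_erase _ _ hmem
    · intro _
      rintro ⟨_, hlt2⟩
      rw [hkb, hja] at hlt2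
      have l2 := Fin.lt_def.mp hlt2
      rw [hvala, hval (bIdx N) hbna] at l2
      rw [if_neg (lt_irrefl _)] at l2
      omega
  · have hjv : (j:ℕ) ≤ N := by omega
    have hiv : (i:ℕ) ≤ N := by omega
    have hia : i ≠ aIdx N := by
      intro h; have := congrArg Fin.val h; simp at this; omega
    have hjna : j ≠ aIdx N := by
      intro h; have := congrArg Fin.val h; simp at this; omega
    have hib : i ≠ bIdx N := by
      intro h; have := congrArg Fin.val h; simp at this; omega
    have hjb : j ≠ bIdx N := by
      intro h; have := congrArg Fin.val h; simp at this; omega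
    by_cases hk2 : (k:ℕ) = N+1
    · have hka : k = aIdx N := Fin.val_inj.mp (by simp [hk2])
      have hjblt : j < bIdx N := Fin.lt_def.mpr (by simp; omega)
      have h0 := hσ i j (bIdx N) hij hjblt
      constructor
      · intro hmem
        have hA1 := h0.1 (Finset.mem_erase.mp hmem).2
        rintro ⟨hl1, hl2⟩
        rw [hka] at hl2
        exact hA1 ⟨(hmono j i hjna hia).mp hl1, (htopa i hia hib).mp hl2⟩
      · intro hmem
        have hA2 := h0.2 (fun hmemA => hmem (Finset.mem_erase.mpr ⟨by omega, hmemA⟩))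
        rintro ⟨hl1, hl2⟩
        rw [hka] at hl1 hl2
        exact hA2 ⟨(htopa i hia hib).mp hl1, (htopa j hjna hjb).mp hl2⟩
    · have hkna : k ≠ aIdx N := by
        intro h; have := congrArg Fin.val h; simp at this; omega
      have h0 := hσ i j k hij hjk
      constructor
      · intro hmem
        have hA1 := h0.1 (Finset.mem_erase.mp hmem).2
        rintro ⟨hl1, hl2⟩
        exact hA1 ⟨(hmono j i hjna hia).mp hl1, (hmono k i hkna hia).mp hl2⟩
      · intro hmem
        have hA2 := h0.2 (fun hmemA => hmem (Finset.mem_erase.mpr ⟨by omega, hmemA⟩))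
        rintro ⟨hl1, hl2⟩
        exact hA2 ⟨(hmono k i hkna hia).mp hl1, (hmono k j hkna hjna).mp hl2⟩

lemma branch_sep (N : ℕ) (σ τ : Equiv.Perm (Fin (N+3)))
    (hPσ : (σ (bIdx N):ℕ) = N+2 ∨ ((σ (aIdx N):ℕ) = N+2 ∧ (σ (bIdx N):ℕ) = N+1))
    (hatopτ : (τ (aIdx N):ℕ) = N+2) (hbtτ : (τ (bIdx N):ℕ) ≤ N) :
    σ ≠ τ.trans (bump N (τ (bIdx N))) := by
  intro h
  rcases hPσ with hs | ⟨hs1, hs2⟩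
  · have hx := Equiv.ext_iff.mp h (bIdx N)
    rw [Equiv.trans_apply] at hx
    have hv := congrArg Fin.val hx
    rw [bump_val] at hv
    split_ifs at hv <;> omega
  · have hx := Equiv.ext_iff.mp h (aIdx N)
    rw [Equiv.trans_apply] at hx
    have hv := congrArg Fin.val hx
    rw [bump_val, if_pos hatopτ] at hv
    omega

/-! ### Main "erase" inequality for `n = N+3` -/

lemma key_erase (N : ℕ) (A : Finset ℕ) (hA : N+2 ∈ A) :
    fsize (N+3) A ≤ fsize (N+3) (A.erase (N+2)) := by
  classical
  have hderive : ∀ σ : Equiv.Perm (Fin (N+3)), inSetAltDomain (N+3) A σ →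
      ¬((σ (bIdx N):ℕ) = N+2 ∨ ((σ (aIdx N):ℕ) = N+2 ∧ (σ (bIdx N):ℕ) = N+1)) →
      (σ (aIdx N):ℕ) = N+2 ∧ (σ (bIdx N):ℕ) ≤ N := by
    intro σ hσ hP
    push_neg at hP
    have hd := top_ab N A hA σ hσ
    have hatop : (σ (aIdx N):ℕ) = N+2 := by tauto
    refine ⟨hatop, ?_⟩
    have := (σ (bIdx N)).isLt
    have h2 := hP.2 hatop
    have h1 := hP.1
    omega
  refine Set.ncard_le_ncard_of_injOn
    (fun σ => if (σ (bIdx N):ℕ) = N+2 ∨ ((σ (aIdx N):ℕ) = N+2 ∧ (σ (bIdx N):ℕ) = N+1) then σ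
              else σ.trans (bump N (σ (bIdx N)))) ?_ ?_ (Set.toFinite _)
  · intro σ hσ
    simp only [setAltDomain, Set.mem_setOf_eq] at hσ ⊢
    split_ifs with hP
    · exact mem_branch1 N A σ hσ hP
    · obtain ⟨hatop, hbt⟩ := hderive σ hσ hP
      exact mem_branch2 N A σ hσ hatop hbt
  · intro σ hσm τ hτm h
    simp only [setAltDomain, Set.mem_setOf_eq] at hσm hτm
    dsimp only at h
    by_cases hPσ : (σ (bIdx N):ℕ) = N+2 ∨ ((σ (aIdx N):ℕ) = N+2 ∧ (σ (bIdx N):ℕ) = N+1) <;>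
      by_cases hPτ : (τ (bIdx N):ℕ) = N+2 ∨ ((τ (aIdx N):ℕ) = N+2 ∧ (τ (bIdx N):ℕ) = N+1)
    · rw [if_pos hPσ, if_pos hPτ] at h; exact h
    · rw [if_pos hPσ, if_neg hPτ] at h
      obtain ⟨hatopτ, hbtτ⟩ := hderive τ hτm hPτ
      exact absurd h (branch_sep N σ τ hPσ hatopτ hbtτ)
    · rw [if_neg hPσ, if_pos hPτ] at h
      obtain ⟨hatopσ, hbtσ⟩ := hderive σ hσm hPσ
      exact absurd h.symm (branch_sep N τ σ hPτ hatopσ hbtσ)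
    · rw [if_neg hPσ, if_neg hPτ] at h
      obtain ⟨hatopσ, hbtσ⟩ := hderive σ hσm hPσ
      obtain ⟨hatopτ, hbtτ⟩ := hderive τ hτm hPτ
      have hbb : σ (bIdx N) = τ (bIdx N) := by
        have hx := Equiv.ext_iff.mp h (aIdx N)
        rw [Equiv.trans_apply, Equiv.trans_apply] at hx
        have hv := congrArg Fin.val hx
        rw [bump_val, if_pos hatopσ, bump_val, if_pos hatopτ] at hv
        exact Fin.val_inj.mp hv
      apply Equiv.ext
      intro x
      have hx := Equiv.ext_iff.mp h x
      rw [Equiv.trans_apply, Equiv.trans_apply, ← hbb] at hx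
      exact (bump N (σ (bIdx N))).injective hx

/-! ### Domains only depend on `A ∩ [2, n-1]` -/

lemma dom_congr (n : ℕ) (A B : Finset ℕ)
    (h : ∀ m, 2 ≤ m → m ≤ n → (m ∈ A ↔ m ∈ B)) :
    setAltDomain n A = setAltDomain n B := by
  have key : ∀ (A B : Finset ℕ), (∀ m, 2 ≤ m → m ≤ n → (m ∈ A ↔ m ∈ B)) →
      setAltDomain n A ⊆ setAltDomain n B := by
    intro A B h σ hσ
    simp only [setAltDomain, Set.mem_setOf_eq] at hσ ⊢
    intro i j k hij hjk
    have h0 := hσ i j k hij hjk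
    have hj1 : 2 ≤ (j:ℕ)+1 := by have := Fin.lt_def.mp hij; omega
    have hj2 : (j:ℕ)+1 ≤ n := j.isLt
    constructor
    · intro hm; exact h0.1 ((h _ hj1 hj2).mpr hm)
    · intro hm; exact h0.2 (fun hA => hm ((h _ hj1 hj2).mp hA))
  exact Set.Subset.antisymm (key A B h) (key B A (fun m h1 h2 => (h m h1 h2).symm))

/-! ### Part 1 in general form -/

lemma part1 (n : ℕ) (hn : 2 ≤ n) (A : Finset ℕ) (hA1 : (n-1) ∈ A) :
    fsize n A ≤ fsize n (A.erase (n-1)) := by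
  rcases Nat.lt_or_ge n 3 with h | h
  · have hn2 : n = 2 := by omega
    subst hn2
    apply le_of_eq
    unfold fsize
    rw [dom_congr 2 A (A.erase 1) ?_]
    intro m h2m hm2
    have hm : m = 2 := by omega
    subst hm
    constructor
    · intro hx; exact Finset.mem_erase.mpr ⟨by omega, hx⟩
    · intro hx; exact (Finset.mem_erase.mp hx).2
  · obtain ⟨N, rfl⟩ : ∃ N, n = N+3 := ⟨n-3, by omega⟩
    have h1 : N+3-1 = N+2 := rfl
    rw [h1]
    exact key_erase N A (by rwa [h1] at hA1)

/-! ### Duality -/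

def dualSet (n : ℕ) (A : Finset ℕ) : Finset ℕ :=
  (Finset.Icc 1 n).filter (fun m => n+1-m ∉ A)

def flipPerm (n : ℕ) (σ : Equiv.Perm (Fin n)) : Equiv.Perm (Fin n) :=
  (Fin.revPerm).trans (σ.trans Fin.revPerm)

lemma flipPerm_apply (n : ℕ) (σ : Equiv.Perm (Fin n)) (x : Fin n) :
    flipPerm n σ x = (σ x.rev).rev := rfl

lemma flipPerm_inj (n : ℕ) : Function.Injective (flipPerm n) := by
  intro σ τ h
  apply Equiv.ext; intro x
  have hx := Equiv.ext_iff.mp h x.rev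
  simp only [flipPerm_apply, Fin.rev_rev] at hx
  exact Fin.rev_inj.mp hx

lemma flip_mem (n : ℕ) (A : Finset ℕ) (σ : Equiv.Perm (Fin n))
    (hσ : inSetAltDomain n A σ) :
    inSetAltDomain n (dualSet n A) (flipPerm n σ) := by
  intro i j k hij hjk
  have hIJ : k.rev < j.rev := Fin.rev_lt_rev.mpr hjk
  have hJK : j.rev < i.rev := Fin.rev_lt_rev.mpr hij
  have h0 := hσ k.rev j.rev i.rev hIJ hJK
  have hjv := j.isLt
  have hkv := k.isLt
  have hij' := Fin.lt_def.mp hij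
  have hjk' := Fin.lt_def.mp hjk
  have hJrev : ((j.rev : Fin n) : ℕ) = n - ((j:ℕ)+1) := Fin.val_rev j
  have hJ1 : ((j.rev : Fin n) : ℕ) + 1 = n - (j:ℕ) := by omega
  have hmem1 : ((j:ℕ)+1 ∈ dualSet n A) ↔ (n - (j:ℕ)) ∉ A := by
    simp only [dualSet, Finset.mem_filter, Finset.mem_Icc]
    have he : n+1-((j:ℕ)+1) = n - (j:ℕ) := by omega
    rw [he]
    constructor
    · rintro ⟨-, h⟩; exact h
    · intro h; exact ⟨⟨by omega, by omega⟩, h⟩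
  constructor
  · intro hmem
    have hnj : (n - (j:ℕ)) ∉ A := hmem1.mp hmem
    have h2 := h0.2 (by rwa [hJ1])
    rintro ⟨hl1, hl2⟩
    rw [flipPerm_apply, flipPerm_apply] at hl1 hl2
    exact h2 ⟨Fin.rev_lt_rev.mp hl2, Fin.rev_lt_rev.mp hl1⟩
  · intro hmem
    have hnj : (n - (j:ℕ)) ∈ A := by
      by_contra hc; exact hmem (hmem1.mpr hc)
    have h1 := h0.1 (by rwa [hJ1])
    rintro ⟨hl1, hl2⟩
    rw [flipPerm_apply, flipPerm_apply] at hl1 hl2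
    exact h1 ⟨Fin.rev_lt_rev.mp hl2, Fin.rev_lt_rev.mp hl1⟩

lemma fsize_le_dual (n : ℕ) (A : Finset ℕ) : fsize n A ≤ fsize n (dualSet n A) := by
  refine Set.ncard_le_ncard_of_injOn (flipPerm n) ?_ ((flipPerm_inj n).injOn) (Set.toFinite _)
  intro σ hσ
  exact flip_mem n A σ hσ

/-! ### Part 2 -/

lemma part2 (n : ℕ) (hn : 2 ≤ n) (A : Finset ℕ) (h2 : 2 ∉ A) :
    fsize n A ≤ fsize n (insert 2 A) := by
  have e1 : fsize n A ≤ fsize n (dualSet n A) := fsize_le_dual n A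
  have hmem : (n-1) ∈ dualSet n A := by
    refine Finset.mem_filter.mpr ⟨Finset.mem_Icc.mpr ⟨by omega, by omega⟩, ?_⟩
    have he : n+1-(n-1) = 2 := by omega
    rw [he]
    exact h2
  have e2 : fsize n (dualSet n A) ≤ fsize n ((dualSet n A).erase (n-1)) :=
    part1 n hn _ hmem
  have heq : (dualSet n A).erase (n-1) = dualSet n (insert 2 A) := by
    ext m
    constructor
    · intro hx
      obtain ⟨hne, hx⟩ := Finset.mem_erase.mp hx
      obtain ⟨hIcc, hnotA⟩ := Finset.mem_filter.mp hx
      obtain ⟨h1m, h2m⟩ := Finset.mem_Icc.mp hIcc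
      refine Finset.mem_filter.mpr ⟨hIcc, ?_⟩
      intro hc
      rcases Finset.mem_insert.mp hc with hc | hc
      · exact hne (by omega)
      · exact hnotA hc
    · intro hx
      obtain ⟨hIcc, hnot⟩ := Finset.mem_filter.mp hx
      obtain ⟨h1m, h2m⟩ := Finset.mem_Icc.mp hIcc
      refine Finset.mem_erase.mpr ⟨?_, Finset.mem_filter.mpr
        ⟨hIcc, fun hc => hnot (Finset.mem_insert.mpr (Or.inr hc))⟩⟩
      intro hc
      exact hnot (Finset.mem_insert.mpr (Or.inl (by omega)))
  rw [heq] at e2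
  have e3 : fsize n (dualSet n (insert 2 A)) ≤
      fsize n (dualSet n (dualSet n (insert 2 A))) := fsize_le_dual n _
  have e4 : setAltDomain n (dualSet n (dualSet n (insert 2 A))) =
      setAltDomain n (insert 2 A) := by
    apply dom_congr
    intro m h2m hmn
    have hmm : n+1-(n+1-m) = m := by omega
    constructor
    · intro hx
      obtain ⟨hIcc, hnot⟩ := Finset.mem_filter.mp hx
      by_contra hc
      apply hnot
      refine Finset.mem_filter.mpr ⟨Finset.mem_Icc.mpr ⟨by omega, by omega⟩, ?_⟩
      rw [hmm]
      exact hc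
    · intro hx
      refine Finset.mem_filter.mpr ⟨Finset.mem_Icc.mpr ⟨by omega, by omega⟩, ?_⟩
      intro hy
      obtain ⟨-, hy⟩ := Finset.mem_filter.mp hy
      rw [hmm] at hy
      exact hy hx
  have e5 : fsize n (dualSet n (dualSet n (insert 2 A))) = fsize n (insert 2 A) := by
    unfold fsize
    rw [e4]
  omega

/-- removing `n-1` from `A`, or adding `2` to `A`, does not
decrease the size of the set-alternating domain. -/
theorem stmt8 (n : ℕ) (hn : 2 ≤ n) (A : Finset ℕ) (hA : A ⊆ Finset.Icc 1 n) :
    ((n - 1) ∈ A → fsize n A ≤ fsize n (A.erase (n-1))) ∧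
    (2 ∉ A → fsize n A ≤ fsize n (insert 2 A)) :=
  ⟨fun h => part1 n hn A h, fun h => part2 n hn A h⟩
end

section
/- Let n ≥ 2. Then f_n({1}) = 2^{n−1}, f_n({n−1}) = 2^{n−1}, and f_n({n}) = 2^{n−1}. Moreover, for every k with 2 ≤ k ≤ n−2 (so n ≥ 4), f_n({k}) = 5·2^{n−3} − 2^{k−2}. -/
/-!
Deleting the last alternative `N + 1` from a ranking in `D_{N+1}({m})` leaves a ranking in
`D_N({m})`, and at most two alternatives are ranked below `N + 1`: by 3N1, two such alternatives
`i < j` force `j = m`. Sorting by how many alternatives lie below `N + 1` gives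
`f_{N+1} = f_N + #{P ∈ D_N : m = N → P ranks N last} + g_N(m)`, where `g_N(m)` counts the
rankings in `D_N({m})` ending with `s, m` for some `s < m`. For `m < N` the middle condition is
automatic, since 1N3 at `(w, m, N)` forces the worst alternative `w` to satisfy `m ≤ w`. In a
ranking counted by `g_{N+1}(m)` the alternative `N + 1` is third from the bottom, so
`g_N(m) = g_m(m) = f_{m-1} = 2^{m-2}` for `N ≥ m`, and the recurrence solves to the stated values.
-/
namespace SetAlternating

open Equiv Finset

instance (n : ℕ) (A : Finset ℕ) : DecidablePred (inSetAltDomain n A) := fun σ => by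
  unfold inSetAltDomain; infer_instance

lemma fsize_eq_card (n : ℕ) (A : Finset ℕ) : fsize n A = #{σ | inSetAltDomain n A σ} := by
  rw [fsize, setAltDomain, Set.ncard_eq_toFinset_card', Set.toFinset_ofPred]

variable {n : ℕ}

/-- Ranks the new alternative `Fin.last n` at `r` and the others in the relative order of `τ`. -/
def insertLast (r : Fin (n + 1)) (τ : Perm (Fin n)) : Perm (Fin (n + 1)) :=
  ((finSuccEquiv' (Fin.last n)).trans τ.optionCongr).trans (finSuccEquiv' r).symm

@[simp]
lemma insertLast_last (r : Fin (n + 1)) (τ : Perm (Fin n)) : insertLast r τ (Fin.last n) = r := by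
  simp [insertLast]

@[simp]
lemma insertLast_castSucc (r : Fin (n + 1)) (τ : Perm (Fin n)) (i : Fin n) :
    insertLast r τ i.castSucc = r.succAbove (τ i) := by
  simp [insertLast, ← Fin.succAbove_last, finSuccEquiv'_succAbove, finSuccEquiv'_symm_some]

lemma insertLast_injective : Function.Injective (Function.uncurry (insertLast (n := n))) := by
  rintro ⟨r, τ⟩ ⟨r', τ'⟩ h
  have hr : r = r' := by simpa using congrArg (· (Fin.last n)) h
  subst hr
  refine Prod.ext rfl (Equiv.ext fun i => Fin.succAbove_right_injective (p := r) ?_)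
  simpa using congrArg (· i.castSucc) h

noncomputable def insertLastEquiv (n : ℕ) : Fin (n + 1) × Perm (Fin n) ≃ Perm (Fin (n + 1)) :=
  Equiv.ofBijective _ <| (Fintype.bijective_iff_injective_and_card _).2
    ⟨insertLast_injective, by simp [Fintype.card_perm, Nat.factorial_succ]⟩

lemma card_filter_eq_sum_insertLast (P : Perm (Fin (n + 1)) → Prop) [DecidablePred P] :
    #{σ | P σ} = ∑ r, #{τ | P (insertLast r τ)} := by
  simp only [card_filter]
  rw [← (insertLastEquiv n).sum_comp, Fintype.sum_prod_type]
  rfl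

lemma insertLast_castSucc_lt_castSucc_iff {r : Fin (n + 1)} {τ : Perm (Fin n)} {i j : Fin n} :
    insertLast r τ i.castSucc < insertLast r τ j.castSucc ↔ τ i < τ j := by
  simp [Fin.succAbove_lt_succAbove_iff]

lemma insertLast_last_lt_castSucc_iff {r : Fin (n + 1)} {τ : Perm (Fin n)} {i : Fin n} :
    insertLast r τ (Fin.last n) < insertLast r τ i.castSucc ↔ r ≤ (τ i).castSucc := by
  simp [Fin.lt_succAbove_iff_le_castSucc]

lemma inSetAltDomain_insertLast_iff {A : Finset ℕ} {r : Fin (n + 1)} {τ : Perm (Fin n)} :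
    inSetAltDomain (n + 1) A (insertLast r τ) ↔ inSetAltDomain n A τ ∧
      ∀ i j : Fin n, i < j →
        ((j : ℕ) + 1 ∈ A → ¬ (τ j < τ i ∧ r ≤ (τ i).castSucc)) ∧
        ((j : ℕ) + 1 ∉ A → ¬ (r ≤ (τ i).castSucc ∧ r ≤ (τ j).castSucc)) := by
  constructor
  · intro h
    refine ⟨fun i j k hij hjk => ?_, fun i j hij => ?_⟩
    · simpa [insertLast_castSucc_lt_castSucc_iff] using
        h i.castSucc j.castSucc k.castSucc (by simpa) (by simpa)
    · simpa only [Fin.val_castSucc, insertLast_castSucc_lt_castSucc_iff,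
        insertLast_last_lt_castSucc_iff] using
        h i.castSucc j.castSucc (Fin.last n) (by simpa) (Fin.castSucc_lt_last j)
  · rintro ⟨hτ, hlast⟩ i j k hij hjk
    obtain ⟨j, rfl⟩ := Fin.exists_castSucc_eq.2 (hjk.trans_le (Fin.le_last k)).ne
    obtain ⟨i, rfl⟩ := Fin.exists_castSucc_eq.2 (hij.trans (Fin.castSucc_lt_last j)).ne
    rw [Fin.castSucc_lt_castSucc_iff] at hij
    induction k using Fin.lastCases with
    | last =>
      simpa only [Fin.val_castSucc, insertLast_castSucc_lt_castSucc_iff,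
        insertLast_last_lt_castSucc_iff] using hlast i j hij
    | cast k =>
      simpa [insertLast_castSucc_lt_castSucc_iff] using
        hτ i j k hij (Fin.castSucc_lt_castSucc_iff.1 hjk)

lemma inSetAltDomain_insertLast_last_iff {A : Finset ℕ} {τ : Perm (Fin n)} :
    inSetAltDomain (n + 1) A (insertLast (Fin.last n) τ) ↔ inSetAltDomain n A τ := by
  simp [inSetAltDomain_insertLast_iff]

lemma not_inSetAltDomain_insertLast_of_add_three_le {m : ℕ} {r : Fin (n + 1)}
    (τ : Perm (Fin n)) (hr : (r : ℕ) + 3 ≤ n) :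
    ¬ inSetAltDomain (n + 1) {m} (insertLast r τ) := by
  rw [inSetAltDomain_insertLast_iff]
  rintro ⟨-, h⟩
  -- 3N1 at `(i, j, n + 1)`: of two alternatives ranked below the new one, the larger is `m`
  have key : ∀ i j, r ≤ (τ i).castSucc → r ≤ (τ j).castSucc → i ≠ j →
      (i : ℕ) + 1 = m ∨ (j : ℕ) + 1 = m := by
    intro i j hi hj hij
    by_contra! hne
    rcases hij.lt_or_gt with hlt | hlt
    · exact (h i j hlt).2 (by simpa using hne.2) ⟨hi, hj⟩
    · exact (h j i hlt).2 (by simpa using hne.1) ⟨hj, hi⟩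
  let x : Fin 3 → Fin n := fun k => τ.symm ⟨r + k, by omega⟩
  have hx : ∀ k, r ≤ (τ (x k)).castSucc := fun k => by simp [x, Fin.le_def]
  have hxinj : ∀ k l, k ≠ l → x k ≠ x l := fun k l hkl hxkl => hkl <| by
    simpa [x, Fin.ext_iff] using hxkl
  have h01 := key _ _ (hx 0) (hx 1) (hxinj 0 1 (by decide))
  have h02 := key _ _ (hx 0) (hx 2) (hxinj 0 2 (by decide))
  have h12 := key _ _ (hx 1) (hx 2) (hxinj 1 2 (by decide))
  have d01 := Fin.val_ne_of_ne (hxinj 0 1 (by decide))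
  have d02 := Fin.val_ne_of_ne (hxinj 0 2 (by decide))
  have d12 := Fin.val_ne_of_ne (hxinj 1 2 (by decide))
  omega

lemma inSetAltDomain_insertLast_castSucc_last_iff {m : ℕ} {τ : Perm (Fin (n + 1))} :
    inSetAltDomain (n + 2) {m} (insertLast (Fin.last n).castSucc τ) ↔
      inSetAltDomain (n + 1) {m} τ ∧ (m = n + 1 → τ (Fin.last n) = Fin.last n) := by
  simp only [inSetAltDomain_insertLast_iff, Fin.castSucc_le_castSucc_iff, Fin.last_le_iff,
    mem_singleton]
  refine and_congr_right fun hτ => ⟨fun h hm => ?_, fun h i j hij => ⟨?_, ?_⟩⟩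
  · by_contra hlast
    have hw : τ.symm (Fin.last n) < Fin.last n :=
      (Fin.le_last _).lt_of_ne fun hw => hlast (τ.symm_apply_eq.1 hw).symm
    exact (h _ _ hw).1 (by simpa using hm.symm)
      ⟨by simpa using (Fin.le_last _).lt_of_ne hlast, by simp⟩
  · rintro hjm ⟨-, hi⟩
    rcases (Fin.le_last j).lt_or_eq with hj | rfl
    · have below : ∀ k, i < k → τ k < τ i := fun k hik => by
        rw [hi]
        exact (Fin.le_last _).lt_of_ne fun h' => hik.ne (τ.injective (hi.trans h'.symm))
      exact (hτ i j _ hij hj).1 (mem_singleton.2 hjm) ⟨below j hij, below _ (hij.trans hj)⟩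
    · exact hij.ne (τ.injective (hi.trans (h (by simpa using hjm.symm)).symm))
  · exact fun _ ⟨hi, hj⟩ => hij.ne (τ.injective (hi.trans hj.symm))

def worst (σ : Perm (Fin (n + 1))) : Fin (n + 1) := σ.symm (Fin.last n)

def secondWorst (σ : Perm (Fin (n + 2))) : Fin (n + 2) := σ.symm (Fin.last n).castSucc

/-- `σ` ends with `s, m` for some `s < m` (alternatives named `1, …, n + 2`). -/
def BottomPairAt (m : ℕ) (σ : Perm (Fin (n + 2))) : Prop :=
  (worst σ : ℕ) + 1 = m ∧ secondWorst σ < worst σ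

instance (m : ℕ) : DecidablePred (BottomPairAt (n := n) m) := fun σ => by
  unfold BottomPairAt; infer_instance

def bottomPairCount (n m : ℕ) : ℕ :=
  #{σ : Perm (Fin (n + 2)) | inSetAltDomain (n + 2) {m} σ ∧ BottomPairAt m σ}

lemma inSetAltDomain_insertLast_castSucc_castSucc_last_iff {m : ℕ} {τ : Perm (Fin (n + 2))} :
    inSetAltDomain (n + 3) {m} (insertLast (Fin.last n).castSucc.castSucc τ) ↔
      inSetAltDomain (n + 2) {m} τ ∧ BottomPairAt m τ := by
  simp only [inSetAltDomain_insertLast_iff, Fin.le_def, Fin.val_castSucc, Fin.val_last,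
    mem_singleton]
  refine and_congr_right fun _ => ?_
  set a := worst τ
  set b := secondWorst τ
  have ha : (τ a : ℕ) = n + 1 := by simp [a, worst]
  have hb : (τ b : ℕ) = n := by simp [b, secondWorst]
  have hab : a ≠ b := fun h => by rw [h] at ha; omega
  have low : ∀ x, n ≤ (τ x : ℕ) → x = a ∨ x = b := fun x hx => by
    rcases (show (τ x : ℕ) = n + 1 ∨ (τ x : ℕ) = n by omega) with h | h
    · exact .inl (τ.injective (Fin.ext (h.trans ha.symm)))
    · exact .inr (τ.injective (Fin.ext (h.trans hb.symm)))
  constructor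
  · intro h
    have hba : b < a := by
      refine (lt_or_gt_of_ne hab).resolve_left fun hlt => ?_
      by_cases hbm : (b : ℕ) + 1 = m
      · exact (h a b hlt).1 hbm ⟨by omega, by omega⟩
      · exact (h a b hlt).2 hbm ⟨by omega, by omega⟩
    refine ⟨?_, hba⟩
    by_contra ham
    exact (h b a hba).2 ham ⟨by omega, by omega⟩
  · rintro ⟨ham, hba⟩ i j hij
    refine ⟨fun hjm ⟨hji, hi⟩ => ?_, fun hjm ⟨hi, hj⟩ => ?_⟩
    · rw [show j = a from Fin.ext (by omega), Fin.lt_def, ha] at hji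
      exact (τ i).isLt.not_ge hji
    · rcases low j hj with rfl | rfl
      · exact hjm ham
      · rcases low i hi with rfl | rfl
        · exact lt_asymm hij hba
        · exact lt_irrefl _ hij

lemma worst_insertLast_last (τ : Perm (Fin n)) :
    worst (insertLast (Fin.last n) τ) = Fin.last n := by
  simp [worst, Equiv.symm_apply_eq]

lemma secondWorst_insertLast_castSucc_last (τ : Perm (Fin (n + 1))) :
    secondWorst (insertLast (Fin.last n).castSucc τ) = Fin.last (n + 1) := by
  simp [secondWorst, Equiv.symm_apply_eq]

lemma bottomPairAt_insertLast_castSucc_castSucc_last_iff {m : ℕ} {τ : Perm (Fin (n + 2))} :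
    BottomPairAt m (insertLast (Fin.last n).castSucc.castSucc τ) ↔ BottomPairAt m τ := by
  have hw : worst (insertLast (Fin.last n).castSucc.castSucc τ) = (worst τ).castSucc := by
    rw [worst, Equiv.symm_apply_eq, insertLast_castSucc, worst, Equiv.apply_symm_apply]
    ext; simp [Fin.succAbove, Fin.lt_def]
  have hs : secondWorst (insertLast (Fin.last n).castSucc.castSucc τ) = (secondWorst τ).castSucc := by
    rw [secondWorst, Equiv.symm_apply_eq, insertLast_castSucc, secondWorst, Equiv.apply_symm_apply]
    ext; simp [Fin.succAbove]
  simp [BottomPairAt, hw, hs]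

lemma card_filter_inSetAltDomain_add_three (m : ℕ) (Q : Perm (Fin (n + 3)) → Prop)
    [DecidablePred Q] :
    #{σ | inSetAltDomain (n + 3) {m} σ ∧ Q σ} =
      #{τ | (inSetAltDomain (n + 2) {m} τ ∧ BottomPairAt m τ) ∧
        Q (insertLast (Fin.last n).castSucc.castSucc τ)} +
      #{τ | (inSetAltDomain (n + 2) {m} τ ∧ (m = n + 2 → τ (Fin.last _) = Fin.last _)) ∧
        Q (insertLast (Fin.last (n + 1)).castSucc τ)} +
      #{τ | inSetAltDomain (n + 2) {m} τ ∧ Q (insertLast (Fin.last (n + 2)) τ)} := by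
  rw [card_filter_eq_sum_insertLast, Fin.sum_univ_castSucc, Fin.sum_univ_castSucc,
    Fin.sum_univ_castSucc, sum_eq_zero, zero_add]
  · simp only [inSetAltDomain_insertLast_last_iff, inSetAltDomain_insertLast_castSucc_last_iff,
      inSetAltDomain_insertLast_castSucc_castSucc_last_iff]
  · intro r _
    rw [card_eq_zero, filter_eq_empty_iff]
    exact fun τ _ h => not_inSetAltDomain_insertLast_of_add_three_le τ (by simp) h.1

lemma fsize_of_le_two {A : Finset ℕ} (hn : n ≤ 2) : fsize n A = n.factorial := by
  rw [fsize_eq_card, filter_true_of_mem, card_univ, Fintype.card_perm, Fintype.card_fin]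
  intro σ _ i j k hij hjk
  have := k.isLt
  rw [Fin.lt_def] at hij hjk
  omega

lemma card_inSetAltDomain_fixing_last (A : Finset ℕ) :
    #{σ | inSetAltDomain (n + 1) A σ ∧ σ (Fin.last n) = Fin.last n} = fsize n A := by
  rw [card_filter_eq_sum_insertLast, sum_eq_single (Fin.last n)]
  · simp [inSetAltDomain_insertLast_last_iff, fsize_eq_card]
  · intro r _ hr
    simp [hr]
  · simp

lemma fsize_add_three (m : ℕ) :
    fsize (n + 3) {m} =
      bottomPairCount n m +
      #{τ | inSetAltDomain (n + 2) {m} τ ∧ (m = n + 2 → τ (Fin.last _) = Fin.last _)} +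
      fsize (n + 2) {m} := by
  simpa [fsize_eq_card, bottomPairCount] using
    card_filter_inSetAltDomain_add_three m (fun _ => True)

lemma bottomPairCount_of_add_two_lt {m : ℕ} (hm : n + 2 < m) : bottomPairCount n m = 0 := by
  rw [bottomPairCount, card_eq_zero, filter_eq_empty_iff]
  rintro σ - ⟨-, hw, -⟩
  have := (worst σ).isLt
  omega

lemma fsize_succ_of_lt : ∀ {n m : ℕ}, n < m → fsize (n + 1) {m} = 2 ^ n
  | 0, _, _ => by simp [fsize_of_le_two]
  | 1, _, _ => by simp [fsize_of_le_two]
  | n + 2, m, h => by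
    simp only [fsize_add_three, bottomPairCount_of_add_two_lt h, zero_add,
      show m ≠ n + 2 by omega, false_imp_iff, and_true, ← fsize_eq_card,
      fsize_succ_of_lt (show n + 1 < m by omega)]
    ring

lemma bottomPairAt_add_two_iff {σ : Perm (Fin (n + 2))} :
    BottomPairAt (n + 2) σ ↔ σ (Fin.last _) = Fin.last _ := by
  have hw : worst σ = Fin.last _ ↔ σ (Fin.last _) = Fin.last _ := by
    rw [worst, Equiv.symm_apply_eq, eq_comm]
  refine ⟨fun h => hw.1 (Fin.ext (by simpa using h.1)), fun h => ⟨by simp [hw.2 h], ?_⟩⟩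
  rw [hw.2 h]
  refine (Fin.le_last _).lt_of_ne fun hs => ?_
  have := congrArg σ (hs.trans (hw.2 h).symm)
  simp [secondWorst, worst, Fin.ext_iff] at this

lemma bottomPairCount_add_two_self : bottomPairCount n (n + 2) = 2 ^ n := by
  simp only [bottomPairCount, bottomPairAt_add_two_iff, card_inSetAltDomain_fixing_last]
  exact fsize_succ_of_lt (by omega)

lemma bottomPairCount_add_one {m : ℕ} (hm : m ≤ n + 2) :
    bottomPairCount (n + 1) m = bottomPairCount n m := by
  have hlast : ∀ τ, ¬ BottomPairAt m (insertLast (Fin.last (n + 2)) τ) := fun τ h => by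
    have := h.1
    rw [worst_insertLast_last, Fin.val_last] at this
    omega
  have hsecond : ∀ τ, ¬ BottomPairAt m (insertLast (Fin.last (n + 1)).castSucc τ) := fun τ h =>
    (Fin.le_last _).not_gt (secondWorst_insertLast_castSucc_last τ ▸ h.2)
  rw [bottomPairCount, card_filter_inSetAltDomain_add_three]
  simp [hlast, hsecond, bottomPairAt_insertLast_castSucc_castSucc_last_iff, bottomPairCount]

lemma bottomPairCount_eq {m : ℕ} (hm : 2 ≤ m) (hmn : m ≤ n + 2) :
    bottomPairCount n m = 2 ^ (m - 2) := by
  obtain ⟨k, rfl⟩ : ∃ k, m = k + 2 := ⟨m - 2, by omega⟩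
  induction n, (show k ≤ n by omega) using Nat.le_induction with
  | base => exact bottomPairCount_add_two_self
  | succ n hkn ih => rw [bottomPairCount_add_one (by omega), ih (by omega)]

lemma bottomPairCount_one : bottomPairCount n 1 = 0 := by
  rw [bottomPairCount, card_eq_zero, filter_eq_empty_iff]
  rintro σ - ⟨-, h1, h2⟩
  rw [show worst σ = 0 from Fin.ext (by rw [Fin.val_zero]; omega)] at h2
  exact Fin.not_lt_zero _ h2

lemma fsize_add_three_of_le {m : ℕ} (hm : m ≤ n + 1) :
    fsize (n + 3) {m} = 2 * fsize (n + 2) {m} + bottomPairCount n m := by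
  simp only [fsize_add_three, show m ≠ n + 2 by omega, false_imp_iff, and_true,
    ← fsize_eq_card]
  ring

lemma fsize_add_three_self : fsize (n + 3) {n + 2} = 2 ^ (n + 2) := by
  simp only [fsize_add_three, forall_const, card_inSetAltDomain_fixing_last]
  rw [bottomPairCount_add_two_self, fsize_succ_of_lt (by omega),
    fsize_succ_of_lt (by omega)]
  ring

lemma fsize_one : fsize (n + 2) {1} = 2 ^ (n + 1) := by
  induction n with
  | zero => simp [fsize_of_le_two]
  | succ n ih => rw [fsize_add_three_of_le (by omega), ih, bottomPairCount_one]; ring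

lemma fsize_add_pow {m : ℕ} (hm : 2 ≤ m) (hmn : m + 2 ≤ n) :
    fsize n {m} + 2 ^ (m - 2) = 5 * 2 ^ (n - 3) := by
  induction n, hmn using Nat.le_induction with
  | base =>
    obtain ⟨k, rfl⟩ : ∃ k, m = k + 2 := ⟨m - 2, by omega⟩
    rw [fsize_add_three_of_le (by omega), bottomPairCount_eq hm (by omega),
      fsize_add_three_self]
    simp only [Nat.add_sub_cancel, show k + 2 + 2 - 3 = k + 1 by omega]
    ring
  | succ n hmn ih =>
    obtain ⟨k, rfl⟩ : ∃ k, n = k + 3 := ⟨n - 3, by omega⟩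
    rw [fsize_add_three_of_le (by omega), bottomPairCount_eq hm (by omega)]
    simp only [show k + 1 + 2 = k + 3 from rfl, show k + 3 - 3 = k by omega,
      show k + 3 + 1 - 3 = k + 1 by omega] at ih ⊢
    rw [pow_succ]
    omega

end SetAlternating

/-- `f_n({1}) = f_n({n-1}) = f_n({n}) = 2^{n-1}`, and for
`2 ≤ k ≤ n-2`, `f_n({k}) = 5·2^{n-3} - 2^{k-2}`. -/
theorem stmt9 (n : ℕ) (hn : 2 ≤ n) :
    fsize n {1} = 2^(n-1) ∧ fsize n {n-1} = 2^(n-1) ∧ fsize n {n} = 2^(n-1) ∧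
    ∀ k : ℕ, 2 ≤ k → k ≤ n - 2 → fsize n {k} = 5 * 2^(n-3) - 2^(k-2) := by
  open SetAlternating in
  obtain ⟨n, rfl⟩ : ∃ n', n = n' + 2 := ⟨n - 2, by omega⟩
  refine ⟨fsize_one, ?_, fsize_succ_of_lt (by omega), fun k hk hkn => ?_⟩
  · rcases n with _ | n
    · exact fsize_one
    · exact fsize_add_three_self
  · have := fsize_add_pow hk (show k + 2 ≤ n + 2 by omega)
    omega
end

section
/- For all integers n and k with 1 < k < n, f_n({k, k+1, …, n−1}) = 2^{n−1}. -/
namespace StmtAux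

instance instDecInSAD (n : ℕ) (A : Finset ℕ) :
    DecidablePred (inSetAltDomain n A) := fun σ => by
  unfold inSetAltDomain; infer_instance

/-- Insert a new alternative at position `w` with rank `r`. -/
def ins {n : ℕ} (w r : Fin (n+1)) (τ : Equiv.Perm (Fin n)) : Equiv.Perm (Fin (n+1)) :=
  (finSuccEquiv' w).trans ((Equiv.optionCongr τ).trans (finSuccEquiv' r).symm)

lemma ins_self {n : ℕ} (w r : Fin (n+1)) (τ : Equiv.Perm (Fin n)) : ins w r τ w = r := by
  simp [ins, finSuccEquiv'_at, finSuccEquiv'_symm_none]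

lemma ins_succAbove {n : ℕ} (w r : Fin (n+1)) (τ : Equiv.Perm (Fin n)) (y : Fin n) :
    ins w r τ (w.succAbove y) = r.succAbove (τ y) := by
  simp [ins, finSuccEquiv'_succAbove, finSuccEquiv'_symm_some]

lemma ins_injective {n : ℕ} (w r : Fin (n+1)) : Function.Injective (ins w r) := by
  intro τ τ' h
  ext y
  have h2 : ins w r τ (w.succAbove y) = ins w r τ' (w.succAbove y) := by rw [h]
  rw [ins_succAbove, ins_succAbove] at h2
  have := (Fin.strictMono_succAbove r).injective h2
  exact congrArg Fin.val this

lemma exists_ins {n : ℕ} (w r : Fin (n+1)) (σ : Equiv.Perm (Fin (n+1))) (h : σ w = r) :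
    ∃ τ : Equiv.Perm (Fin n), σ = ins w r τ := by
  set e : Option (Fin n) ≃ Option (Fin n) :=
    ((finSuccEquiv' w).symm.trans σ).trans (finSuccEquiv' r) with he
  have hnone : e none = none := by
    simp [he, finSuccEquiv'_symm_none, h, finSuccEquiv'_at]
  refine ⟨Equiv.removeNone e, ?_⟩
  ext x
  by_cases hx : x = w
  · subst hx; rw [ins_self, h]
  · obtain ⟨y, rfl⟩ := Fin.exists_succAbove_eq hx
    rw [ins_succAbove]
    have hex : ∃ z, e (some y) = some z := by
      rcases hsome : e (some y) with _ | z
      · exact absurd (e.injective (hsome.trans hnone.symm)) (Option.some_ne_none y)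
      · exact ⟨z, rfl⟩
    have h1 : some (Equiv.removeNone e y) = e (some y) := Equiv.removeNone_some e hex
    have h2 : e (some y) = finSuccEquiv' r (σ (w.succAbove y)) := by
      simp [he, finSuccEquiv'_symm_some]
    have h3 := congrArg (finSuccEquiv' r).symm (h1.trans h2)
    rw [Equiv.symm_apply_apply, finSuccEquiv'_symm_some] at h3
    exact (congrArg Fin.val h3.symm)

lemma succAbove_val {n : ℕ} (w : Fin (n+1)) (y : Fin n) :
    ((w.succAbove y : Fin (n+1)) : ℕ) = if (y : ℕ) < (w : ℕ) then (y : ℕ) else (y : ℕ) + 1 := by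
  rcases lt_or_ge ((y : ℕ)) ((w : ℕ)) with hlt | hge
  · rw [Fin.succAbove_of_castSucc_lt _ _ (by rwa [Fin.lt_def, Fin.coe_castSucc]),
      if_pos hlt, Fin.coe_castSucc]
  · rw [Fin.succAbove_of_le_castSucc _ _ (by rwa [Fin.le_def, Fin.coe_castSucc]),
      if_neg (not_lt.mpr hge), Fin.val_succ]

/-- Transfer lemma: inserting a new worst alternative at position `n-1` or `n`. -/
lemma mem_iff_bot {n k : ℕ} (hn : 2 ≤ n) (hk : k ≤ n)
    {w : Fin (n+1)} (hw : n - 1 ≤ (w : ℕ)) (τ : Equiv.Perm (Fin n)) :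
    inSetAltDomain (n+1) (Finset.Icc k n) (ins w (Fin.last n) τ) ↔
      inSetAltDomain n (Finset.Icc k (n-1)) τ := by
  constructor
  · intro hσ i j l hij hjl
    obtain ⟨H1, H2⟩ := hσ (w.succAbove i) (w.succAbove j) (w.succAbove l)
      ((Fin.succAbove_lt_succAbove_iff (p := w)).2 hij)
      ((Fin.succAbove_lt_succAbove_iff (p := w)).2 hjl)
    simp only [ins_succAbove, Fin.succAbove_lt_succAbove_iff] at H1 H2
    have hjlv : (j : ℕ) < (l : ℕ) := hjl
    have hlv : (l : ℕ) < n := l.isLt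
    have hjv : ((w.succAbove j : Fin (n+1)) : ℕ) = (j : ℕ) := by
      rw [succAbove_val, if_pos (by omega)]
    have hmm : (((w.succAbove j : Fin (n+1)) : ℕ) + 1 ∈ Finset.Icc k n) ↔
        ((j : ℕ) + 1 ∈ Finset.Icc k (n-1)) := by
      rw [hjv]; simp only [Finset.mem_Icc]; omega
    exact ⟨fun hA => H1 (hmm.mpr hA), fun hA => H2 (fun hc => hA (hmm.mp hc))⟩
  · intro hτ i j l hij hjl
    by_cases hl : l = w
    · subst hl
      rw [ins_self]
      exact ⟨fun _ hc => absurd hc.2 (not_lt.mpr (Fin.le_last _)),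
        fun _ hc => absurd hc.1 (not_lt.mpr (Fin.le_last _))⟩
    · by_cases hj : j = w
      · subst hj
        have hjlv : (j : ℕ) < (l : ℕ) := hjl
        have hlv : (l : ℕ) < n + 1 := l.isLt
        rw [ins_self]
        constructor
        · intro _ hc
          exact absurd hc.1 (not_lt.mpr (Fin.le_last _))
        · intro hA
          exact absurd (by simp only [Finset.mem_Icc]; omega) hA
      · by_cases hi : i = w
        · exfalso
          subst hi
          have h1 : (i : ℕ) < (j : ℕ) := hij
          have h2 : (j : ℕ) < (l : ℕ) := hjl
          have h3 : (l : ℕ) < n + 1 := l.isLt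
          omega
        · obtain ⟨i', rfl⟩ := Fin.exists_succAbove_eq hi
          obtain ⟨j', rfl⟩ := Fin.exists_succAbove_eq hj
          obtain ⟨l', rfl⟩ := Fin.exists_succAbove_eq hl
          have hij' : i' < j' := Fin.succAbove_lt_succAbove_iff.mp hij
          have hjl' : j' < l' := Fin.succAbove_lt_succAbove_iff.mp hjl
          obtain ⟨H1, H2⟩ := hτ i' j' l' hij' hjl'
          have hjlv : (j' : ℕ) < (l' : ℕ) := hjl'
          have hlv : (l' : ℕ) < n := l'.isLt
          have hjv : ((w.succAbove j' : Fin (n+1)) : ℕ) = (j' : ℕ) := by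
            rw [succAbove_val, if_pos (by omega)]
          have hmm : (((w.succAbove j' : Fin (n+1)) : ℕ) + 1 ∈ Finset.Icc k n) ↔
              ((j' : ℕ) + 1 ∈ Finset.Icc k (n-1)) := by
            rw [hjv]; simp only [Finset.mem_Icc]; omega
          simp only [ins_succAbove, Fin.succAbove_lt_succAbove_iff]
          exact ⟨fun hA => H1 (hmm.mp hA), fun hA => H2 (fun hc => hA (hmm.mpr hc))⟩

/-- Transfer lemma: inserting a new best alternative at position `0` or `1`. -/
lemma mem_iff_top {n k : ℕ} (hk3 : 3 ≤ k)
    {w : Fin (n+1)} (hw : (w : ℕ) ≤ 1) (τ : Equiv.Perm (Fin n)) :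
    inSetAltDomain (n+1) (Finset.Icc k n) (ins w 0 τ) ↔
      inSetAltDomain n (Finset.Icc (k-1) (n-1)) τ := by
  constructor
  · intro hσ i j l hij hjl
    obtain ⟨H1, H2⟩ := hσ (w.succAbove i) (w.succAbove j) (w.succAbove l)
      ((Fin.succAbove_lt_succAbove_iff (p := w)).2 hij)
      ((Fin.succAbove_lt_succAbove_iff (p := w)).2 hjl)
    simp only [ins_succAbove, Fin.succAbove_lt_succAbove_iff] at H1 H2
    have hijv : (i : ℕ) < (j : ℕ) := hij
    have hjlv : (j : ℕ) < (l : ℕ) := hjl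
    have hlv : (l : ℕ) < n := l.isLt
    have hjv : ((w.succAbove j : Fin (n+1)) : ℕ) = (j : ℕ) + 1 := by
      rw [succAbove_val, if_neg (by omega)]
    have hmm : (((w.succAbove j : Fin (n+1)) : ℕ) + 1 ∈ Finset.Icc k n) ↔
        ((j : ℕ) + 1 ∈ Finset.Icc (k-1) (n-1)) := by
      rw [hjv]; simp only [Finset.mem_Icc]; omega
    exact ⟨fun hA => H1 (hmm.mpr hA), fun hA => H2 (fun hc => hA (hmm.mp hc))⟩
  · intro hτ i j l hij hjl
    by_cases hi : i = w
    · subst hi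
      rw [ins_self]
      exact ⟨fun _ hc => absurd hc.1 (not_lt.mpr (Fin.zero_le _)),
        fun _ hc => absurd hc.1 (not_lt.mpr (Fin.zero_le _))⟩
    · by_cases hj : j = w
      · subst hj
        have hijv : (i : ℕ) < (j : ℕ) := hij
        rw [ins_self]
        constructor
        · intro hA
          exact absurd hA (by simp only [Finset.mem_Icc]; omega)
        · intro _ hc
          exact absurd hc.2 (not_lt.mpr (Fin.zero_le _))
      · by_cases hl : l = w
        · exfalso
          subst hl
          have h1 : (i : ℕ) < (j : ℕ) := hij
          have h2 : (j : ℕ) < (l : ℕ) := hjl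
          omega
        · obtain ⟨i', rfl⟩ := Fin.exists_succAbove_eq hi
          obtain ⟨j', rfl⟩ := Fin.exists_succAbove_eq hj
          obtain ⟨l', rfl⟩ := Fin.exists_succAbove_eq hl
          have hij' : i' < j' := Fin.succAbove_lt_succAbove_iff.mp hij
          have hjl' : j' < l' := Fin.succAbove_lt_succAbove_iff.mp hjl
          obtain ⟨H1, H2⟩ := hτ i' j' l' hij' hjl'
          have hijv : (i' : ℕ) < (j' : ℕ) := hij'
          have hjlv : (j' : ℕ) < (l' : ℕ) := hjl'
          have hlv : (l' : ℕ) < n := l'.isLt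
          have hjv : ((w.succAbove j' : Fin (n+1)) : ℕ) = (j' : ℕ) + 1 := by
            rw [succAbove_val, if_neg (by omega)]
          have hmm : (((w.succAbove j' : Fin (n+1)) : ℕ) + 1 ∈ Finset.Icc k n) ↔
              ((j' : ℕ) + 1 ∈ Finset.Icc (k-1) (n-1)) := by
            rw [hjv]; simp only [Finset.mem_Icc]; omega
          simp only [ins_succAbove, Fin.succAbove_lt_succAbove_iff]
          exact ⟨fun hA => H1 (hmm.mp hA), fun hA => H2 (fun hc => hA (hmm.mpr hc))⟩

/-- In the domain, the worst-ranked alternative has index `n-1` or `n`. -/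
lemma loc_bot {n k : ℕ} (hn : 2 ≤ n) (hk : k ≤ n) {σ : Equiv.Perm (Fin (n+1))}
    (hσ : inSetAltDomain (n+1) (Finset.Icc k n) σ) :
    σ ⟨n-1, by omega⟩ = Fin.last n ∨ σ (Fin.last n) = Fin.last n := by
  set w := σ.symm (Fin.last n) with hwdef
  have hw : σ w = Fin.last n := σ.apply_symm_apply _
  by_cases h : (w : ℕ) < n - 1
  · exfalso
    have h1 : w < (⟨n-1, by omega⟩ : Fin (n+1)) := h
    have h2 : (⟨n-1, by omega⟩ : Fin (n+1)) < Fin.last n := by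
      rw [Fin.lt_def]; simp only [Fin.val_last]; omega
    obtain ⟨H1, _⟩ := hσ w ⟨n-1, by omega⟩ (Fin.last n) h1 h2
    apply H1 (by simp only [Finset.mem_Icc]; omega)
    constructor
    · rw [hw]
      refine lt_of_le_of_ne (Fin.le_last _) (fun e => ?_)
      exact (ne_of_lt h1) (σ.injective (e.trans hw.symm)).symm
    · rw [hw]
      refine lt_of_le_of_ne (Fin.le_last _) (fun e => ?_)
      have h4 := σ.injective (e.trans hw.symm)
      have h3 : w < Fin.last n := h1.trans h2
      rw [h4] at h3
      exact lt_irrefl _ h3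
  · have hlt : (w : ℕ) < n + 1 := w.isLt
    rcases (by omega : (w : ℕ) = n - 1 ∨ (w : ℕ) = n) with h' | h'
    · left
      have : w = (⟨n-1, by omega⟩ : Fin (n+1)) := Fin.ext h'
      rw [← this]; exact hw
    · right
      have : w = Fin.last n := Fin.ext (by rw [h', Fin.val_last])
      conv_lhs => rw [← this]
      exact hw

/-- In the domain (with `3 ≤ k`), the best-ranked alternative has index `0` or `1`. -/
lemma loc_top {n k : ℕ} (hn : 2 ≤ n) (hk3 : 3 ≤ k) {σ : Equiv.Perm (Fin (n+1))}
    (hσ : inSetAltDomain (n+1) (Finset.Icc k n) σ) :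
    σ 0 = 0 ∨ σ 1 = 0 := by
  have hv1 : ((1 : Fin (n+1)) : ℕ) = 1 := by
    rw [Fin.val_one']; exact Nat.mod_eq_of_lt (by omega)
  set w := σ.symm 0 with hwdef
  have hw : σ w = 0 := σ.apply_symm_apply _
  by_cases h : 2 ≤ (w : ℕ)
  · exfalso
    have h1 : (0 : Fin (n+1)) < 1 := by rw [Fin.lt_def, hv1, Fin.val_zero]; omega
    have h2 : (1 : Fin (n+1)) < w := by rw [Fin.lt_def, hv1]; omega
    obtain ⟨_, H2⟩ := hσ 0 1 w h1 h2
    apply H2 (by rw [hv1]; simp only [Finset.mem_Icc]; omega)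
    constructor
    · rw [hw]
      refine lt_of_le_of_ne (Fin.zero_le _) (fun e => ?_)
      have h4 := σ.injective (hw.trans e)
      rw [h4] at h
      simp only [Fin.val_zero] at h
      omega
    · rw [hw]
      refine lt_of_le_of_ne (Fin.zero_le _) (fun e => ?_)
      have h4 := σ.injective (hw.trans e)
      rw [h4, hv1] at h
      omega
  · rcases (by omega : (w : ℕ) = 0 ∨ (w : ℕ) = 1) with h' | h'
    · left
      have : w = 0 := Fin.ext (by rw [h', Fin.val_zero])
      conv_lhs => rw [← this]
      exact hw
    · right
      have : w = 1 := Fin.ext (by rw [h', hv1])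
      conv_lhs => rw [← this]
      exact hw

lemma card_eq {n : ℕ} (A A' : Finset ℕ) (r w₁ w₂ : Fin (n+1)) (hne : w₁ ≠ w₂)
    (hmem : ∀ w : Fin (n+1), w = w₁ ∨ w = w₂ → ∀ τ,
      (inSetAltDomain (n+1) A (ins w r τ) ↔ inSetAltDomain n A' τ))
    (hloc : ∀ σ, inSetAltDomain (n+1) A σ → σ w₁ = r ∨ σ w₂ = r) :
    fsize (n+1) A = 2 * fsize n A' := by
  have himg : setAltDomain (n+1) A =
      (ins w₁ r '' setAltDomain n A') ∪ (ins w₂ r '' setAltDomain n A') := by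
    ext σ
    simp only [Set.mem_union, Set.mem_image, setAltDomain, Set.mem_setOf_eq]
    constructor
    · intro hσ
      rcases hloc σ hσ with h | h
      · obtain ⟨τ, rfl⟩ := exists_ins w₁ r σ h
        exact Or.inl ⟨τ, (hmem w₁ (Or.inl rfl) τ).1 hσ, rfl⟩
      · obtain ⟨τ, rfl⟩ := exists_ins w₂ r σ h
        exact Or.inr ⟨τ, (hmem w₂ (Or.inr rfl) τ).1 hσ, rfl⟩
    · rintro (⟨τ, hτ, rfl⟩ | ⟨τ, hτ, rfl⟩)
      · exact (hmem w₁ (Or.inl rfl) τ).2 hτ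
      · exact (hmem w₂ (Or.inr rfl) τ).2 hτ
  have hdisj : Disjoint (ins w₁ r '' setAltDomain n A') (ins w₂ r '' setAltDomain n A') := by
    rw [Set.disjoint_left]
    rintro σ ⟨τ, _, rfl⟩ ⟨τ', _, hEq⟩
    apply hne
    have h1 : ins w₁ r τ w₁ = r := ins_self _ _ _
    have h2 : ins w₁ r τ w₂ = r := by rw [← hEq, ins_self]
    exact (ins w₁ r τ).injective (h1.trans h2.symm)
  rw [fsize, himg, Set.ncard_union_eq hdisj (Set.toFinite _) (Set.toFinite _),
    Set.ncard_image_of_injective _ (ins_injective w₁ r),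
    Set.ncard_image_of_injective _ (ins_injective w₂ r)]
  exact (two_mul _).symm

lemma step_bot {n k : ℕ} (hn : 2 ≤ n) (hk2 : 2 ≤ k) (hkn : k < n) :
    fsize (n+1) (Finset.Icc k n) = 2 * fsize n (Finset.Icc k (n-1)) := by
  refine card_eq _ _ (Fin.last n) ⟨n-1, by omega⟩ (Fin.last n) ?_ ?_ ?_
  · intro h
    have h2 := congrArg Fin.val h
    rw [Fin.val_last] at h2
    simp only [Fin.val_mk] at h2
    omega
  · rintro w (rfl | rfl) τ
    · exact mem_iff_bot hn hkn.le le_rfl τ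
    · exact mem_iff_bot hn hkn.le (by rw [Fin.val_last]; omega) τ
  · intro σ hσ
    exact loc_bot hn hkn.le hσ

lemma step_top {n k : ℕ} (hn : 2 ≤ n) (hk3 : 3 ≤ k) :
    fsize (n+1) (Finset.Icc k n) = 2 * fsize n (Finset.Icc (k-1) (n-1)) := by
  have hv1 : ((1 : Fin (n+1)) : ℕ) = 1 := by
    rw [Fin.val_one']; exact Nat.mod_eq_of_lt (by omega)
  refine card_eq _ _ 0 0 1 ?_ ?_ ?_
  · intro h
    have := congrArg Fin.val h
    rw [Fin.val_zero, hv1] at this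
    omega
  · rintro w (rfl | rfl) τ
    · exact mem_iff_top hk3 (by rw [Fin.val_zero]; omega) τ
    · exact mem_iff_top hk3 (by rw [hv1]) τ
  · intro σ hσ
    exact loc_top hn hk3 hσ

lemma base : fsize 3 (Finset.Icc 2 2) = 4 := by
  have h : setAltDomain 3 (Finset.Icc 2 2) =
      ↑(Finset.univ.filter (fun σ => inSetAltDomain 3 (Finset.Icc 2 2) σ)) := by
    ext σ
    simp [setAltDomain]
  rw [fsize, h, Set.ncard_coe_finset]
  decide

end StmtAux

/-- for `1 < k < n`, `f_n({k, k+1, …, n-1})` = `2^{n-1}`. -/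
theorem stmt11 (n k : ℕ) (hk : 1 < k) (hkn : k < n) :
    fsize n (Finset.Icc k (n-1)) = 2^(n-1) := by
  induction n generalizing k with
  | zero => omega
  | succ m ih =>
    simp only [Nat.add_sub_cancel]
    by_cases h3 : m < 3
    · have hm : m = 2 := by omega
      have hk2 : k = 2 := by omega
      subst hm hk2
      simpa using StmtAux.base
    · push_neg at h3
      rcases Nat.lt_or_ge k 3 with h | h
      · have hk2 : k = 2 := by omega
        subst hk2
        rw [StmtAux.step_bot (by omega) le_rfl (by omega), ih 2 (by omega) (by omega)]
        have hm1 : m - 1 + 1 = m := by omega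
        conv_rhs => rw [← hm1, pow_succ]
        ring
      · rw [StmtAux.step_top (by omega) h, ih (k-1) (by omega) (by omega)]
        have hm1 : m - 1 + 1 = m := by omega
        conv_rhs => rw [← hm1, pow_succ]
        ring
end
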